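/- arXiv:2603.11038 — 7 statements merged into one kernel-verified Lean document; each statement's English description precedes it below -/
import Mathlib

section
/- Let F be a field, n ≥ 1, and f ∈ F[x_1,…,x_n] a nonzero polynomial of total degree d. Then for any finite subset S ⊆ F, ∑_{p ∈ S^n} mult(f, p) ≤ d · |S|^{n−1}. -/
open MvPolynomial

section Defs

variable {F : Type*} [Field F]

/-- A polynomial in the block variables `x_{i,j}` (`i ∈ Fin d`, `j ∈ Fin n`) is
multilinear exactly in the blocks of `S`: every monomial has degree 1 in each block
`i ∈ S` and degree 0 in each block `i ∉ S`. -/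
def IsMultilinearOn {d n : ℕ} (S : Finset (Fin d))
    (f : MvPolynomial (Fin d × Fin n) F) : Prop :=
  ∀ m ∈ f.support, ∀ i : Fin d,
    (∑ j : Fin n, m (i, j)) = if i ∈ S then 1 else 0

/-- A multilinear form: degree 1 in every block of variables. -/
def IsMultilinear {d n : ℕ} (f : MvPolynomial (Fin d × Fin n) F) : Prop :=
  IsMultilinearOn Finset.univ f

/-- Commutative rank: the rank of the matrix over the field of fractions of the
polynomial ring. -/
noncomputable def CR {σ : Type*} {α β : Type*} [Fintype β]
    (M : Matrix α β (MvPolynomial σ F)) : ℕ :=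
  (M.map (algebraMap (MvPolynomial σ F) (FractionRing (MvPolynomial σ F)))).rank

/-- `M` is the sum of `r` outer products `u ⊗ v`, where `u` has entries multilinear
in the blocks of some `S ⊆ [d]` and `v` has entries multilinear in the complementary
blocks. -/
def HasPRDecomp {d n a b : ℕ}
    (M : Matrix (Fin a) (Fin b) (MvPolynomial (Fin d × Fin n) F)) (r : ℕ) : Prop :=
  ∃ (S : Fin r → Finset (Fin d))
    (u : Fin r → Fin a → MvPolynomial (Fin d × Fin n) F)
    (v : Fin r → Fin b → MvPolynomial (Fin d × Fin n) F),
    (∀ t i, IsMultilinearOn (S t) (u t i)) ∧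
    (∀ t j, IsMultilinearOn (S t)ᶜ (v t j)) ∧
    M = ∑ t, Matrix.of fun i j => u t i * v t j

/-- Partition rank of a matrix of multilinear forms. -/
noncomputable def PR {d n a b : ℕ}
    (M : Matrix (Fin a) (Fin b) (MvPolynomial (Fin d × Fin n) F)) : ℕ :=
  sInf {r | HasPRDecomp M r}

/-- Evaluation of a matrix of multilinear forms at a point `p ∈ (F^n)^d`. -/
noncomputable def evalMat {d n : ℕ} {α β : Type*}
    (M : Matrix α β (MvPolynomial (Fin d × Fin n) F)) (p : Fin d → Fin n → F) :
    Matrix α β F :=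
  M.map (eval fun v => p v.1 v.2)

/-- Max-rank: the largest rank of a scalar evaluation. -/
noncomputable def MaxR {d n : ℕ} {α β : Type*} [Fintype β]
    (M : Matrix α β (MvPolynomial (Fin d × Fin n) F)) : ℕ :=
  ⨆ p : Fin d → Fin n → F, (evalMat M p).rank

/-- Partial evaluation: substitute `x_i := p_i` for `i ∈ S`, leaving the other
blocks of variables untouched. -/
noncomputable def pevalMat {d n : ℕ} {α β : Type*}
    (M : Matrix α β (MvPolynomial (Fin d × Fin n) F)) (S : Finset (Fin d))
    (p : Fin d → Fin n → F) :
    Matrix α β (MvPolynomial (Fin d × Fin n) F) :=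
  M.map (aeval fun v : Fin d × Fin n => if v.1 ∈ S then C (p v.1 v.2) else X v)

end Defs

section D1

variable {F : Type*} [Field F]

/-- Partition-rank decomposition for matrices of linear forms: a sum of `r` outer
products, each either (scalars) ⊗ (linear forms) or (linear forms) ⊗ (scalars). -/
def HasPR1Decomp {n a b : ℕ}
    (M : Matrix (Fin a) (Fin b) (MvPolynomial (Fin n) F)) (r : ℕ) : Prop :=
  ∃ (c : Fin r → Bool)
    (u : Fin r → Fin a → MvPolynomial (Fin n) F)
    (v : Fin r → Fin b → MvPolynomial (Fin n) F),
    (∀ t i, (u t i).IsHomogeneous (if c t then 0 else 1)) ∧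
    (∀ t j, (v t j).IsHomogeneous (if c t then 1 else 0)) ∧
    M = ∑ t, Matrix.of fun i j => u t i * v t j

/-- Partition rank of a matrix of linear forms. -/
noncomputable def PR1 {n a b : ℕ}
    (M : Matrix (Fin a) (Fin b) (MvPolynomial (Fin n) F)) : ℕ :=
  sInf {r | HasPR1Decomp M r}

/-- Max-rank of a matrix of linear forms. -/
noncomputable def MaxR1 {n a b : ℕ}
    (M : Matrix (Fin a) (Fin b) (MvPolynomial (Fin n) F)) : ℕ :=
  ⨆ p : Fin n → F, (M.map (eval p)).rank

end D1

section Tensor3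

variable {F : Type*} [Field F]

/-- Substitute the first two blocks of variables of a trilinear form at `x` and `y`,
leaving a polynomial in the third block. -/
noncomputable def sub01 {n : ℕ} (T : MvPolynomial (Fin 3 × Fin n) F)
    (x y : Fin n → F) : MvPolynomial (Fin 3 × Fin n) F :=
  aeval (fun v : Fin 3 × Fin n =>
    if v.1 = 0 then C (x v.2) else if v.1 = 1 then C (y v.2) else X v) T

open Classical in
/-- The bias of a 3-tensor: the probability over `(x, y)` that `T(x, y, -)` is the
zero linear form. -/
noncomputable def bias {n : ℕ} [Fintype F] (T : MvPolynomial (Fin 3 × Fin n) F) : ℝ :=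
  ((Finset.univ.filter fun p : (Fin n → F) × (Fin n → F) =>
      sub01 T p.1 p.2 = 0).card : ℝ) /
    ((Fintype.card ((Fin n → F) × (Fin n → F))) : ℝ)

/-- The analytic rank of a 3-tensor. -/
noncomputable def AR {n : ℕ} [Fintype F] (T : MvPolynomial (Fin 3 × Fin n) F) : ℝ :=
  - Real.logb (Fintype.card F) (bias T)

/-- A slice-rank decomposition: `T = ∑ f_t g_t` with `f_t` a linear form in one
block and `g_t` a bilinear form in the other two blocks. -/
def HasSRDecomp {n : ℕ} (T : MvPolynomial (Fin 3 × Fin n) F) (r : ℕ) : Prop :=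
  ∃ (c : Fin r → Fin 3) (f g : Fin r → MvPolynomial (Fin 3 × Fin n) F),
    (∀ t, IsMultilinearOn {c t} (f t)) ∧
    (∀ t, IsMultilinearOn ({c t} : Finset (Fin 3))ᶜ (g t)) ∧
    T = ∑ t, f t * g t

/-- Slice rank of a 3-tensor. -/
noncomputable def SR {n : ℕ} (T : MvPolynomial (Fin 3 × Fin n) F) : ℕ :=
  sInf {r | HasSRDecomp T r}

/-- The matrix `mat T` of a 3-tensor, evaluated at `x` in its first block:
the `(j,k)` entry is `T(x, e_j, e_k)`. -/
noncomputable def matT {n : ℕ} (T : MvPolynomial (Fin 3 × Fin n) F)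
    (x : Fin n → F) : Matrix (Fin n) (Fin n) F :=
  Matrix.of fun j k => eval (fun v : Fin 3 × Fin n =>
    if v.1 = 0 then x v.2
    else if v.1 = 1 then (if v.2 = j then 1 else 0)
    else (if v.2 = k then 1 else 0)) T

end Tensor3

section Mult

variable {F : Type*} [Field F]

/-- `mult(f, p)`: the minimum total degree of a monomial of `f(x + p)`. -/
noncomputable def polyMult {n : ℕ} (f : MvPolynomial (Fin n) F) (p : Fin n → F) : ℕ :=
  sInf {k | ∃ m ∈ (aeval (fun i : Fin n => X i + C (p i)) f :
    MvPolynomial (Fin n) F).support, (∑ i, m i) = k}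

end Mult

/-!
Induction on `n`. Write `f = ∑ⱼ Qⱼ(y) xʲ` with `t = deg_x f`, so that `deg Q_t + t ≤ deg f`.
Fix `a ∈ Sⁿ⁻¹` and a lowest-degree monomial `y^α` of `Q_t(y + a)`, and let
`h(x) = ∑ⱼ [y^α] Qⱼ(y + a) xʲ`, a nonzero univariate polynomial of degree `t`. The monomial
`x^ν y^α` with `ν` the multiplicity of `b` as a root of `h` survives in `f(x + b, y + a)`, so
`mult(f, (b, a)) ≤ mult(Q_t, a) + ν`. Summing over `b ∈ S` gives at most `|S| mult(Q_t, a) + t`,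
and summing over `a` with the induction hypothesis for `Q_t` gives the bound.
-/

namespace MvPolynomial

section Shift

variable {R σ : Type*} [CommSemiring R]

noncomputable def shift (p : σ → R) : MvPolynomial σ R →ₐ[R] MvPolynomial σ R :=
  aeval fun i => X i + C (p i)

theorem shift_shift (p q : σ → R) (f : MvPolynomial σ R) :
    shift p (shift q f) = shift (p + q) f := by
  rw [← AlgHom.comp_apply]
  congr 1
  refine algHom_ext fun i => ?_
  simp [shift, add_assoc]

theorem shift_zero_apply (f : MvPolynomial σ R) : shift 0 f = f := by
  simp [shift]

open Polynomial in
theorem finSuccEquiv_shift_cons {n : ℕ} (b : R) (a : Fin n → R)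
    (f : MvPolynomial (Fin (n + 1)) R) :
    finSuccEquiv R n (shift (Fin.cons b a) f) =
      taylor (C b) ((finSuccEquiv R n f).map (shift a)) := by
  have hom : (finSuccEquiv R n).toAlgHom.comp (shift (Fin.cons b a)) =
      ((taylorAlgHom (C b : MvPolynomial (Fin n) R)).restrictScalars R).comp
        ((Polynomial.mapAlgHom (shift a)).comp (finSuccEquiv R n).toAlgHom) := by
    refine algHom_ext fun i => ?_
    cases i using Fin.cases <;> simp [shift, finSuccEquiv_apply]
  exact DFunLike.congr_fun hom f

end Shift

theorem shift_injective {R σ : Type*} [CommRing R] (p : σ → R) :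
    Function.Injective (shift p) :=
  Function.LeftInverse.injective (g := shift (-p)) fun f => by
    rw [shift_shift, neg_add_cancel, shift_zero_apply]

end MvPolynomial

namespace Polynomial

theorem sum_rootMultiplicity_le_natDegree {R : Type*} [CommRing R] [IsDomain R] (h : R[X])
    (S : Finset R) : ∑ b ∈ S, h.rootMultiplicity b ≤ h.natDegree := by
  classical
  calc ∑ b ∈ S, h.rootMultiplicity b = ∑ b ∈ S, h.roots.count b := by simp [count_roots]
    _ ≤ ∑ b ∈ S ∪ h.roots.toFinset, h.roots.count b :=
      Finset.sum_le_sum_of_subset Finset.subset_union_left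
    _ = Multiset.card h.roots := Multiset.sum_count_eq_card fun b hb => by simp [hb]
    _ ≤ h.natDegree := card_roots' h

variable {K R : Type*} [CommSemiring K] [CommSemiring R] [Algebra K R]

noncomputable def mapLinear (L : R →ₗ[K] K) : R[X] →ₗ[K] K[X] :=
  lsum fun j => (monomial j).comp L

variable (L : R →ₗ[K] K)

@[simp]
theorem coeff_mapLinear (q : R[X]) (k : ℕ) : (mapLinear L q).coeff k = L (q.coeff k) := by
  rw [mapLinear, lsum_apply, Polynomial.sum_def, finsetSum_coeff]
  simp only [LinearMap.coe_comp, Function.comp_apply, coeff_monomial]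
  rw [Finset.sum_ite_eq']
  split_ifs with hk
  · rfl
  · rw [notMem_support_iff.1 hk, map_zero]

@[simp]
theorem mapLinear_monomial (j : ℕ) (c : R) : mapLinear L (monomial j c) = monomial j (L c) := by
  ext k
  simp [coeff_monomial, apply_ite L]

theorem mapLinear_taylor (b : K) (q : R[X]) :
    mapLinear L (taylor (algebraMap K R b) q) = taylor b (mapLinear L q) := by
  induction q using Polynomial.induction_on' with
  | add p q hp hq => simp only [map_add, hp, hq]
  | monomial j c =>
    have hpow : (X + C (algebraMap K R b)) ^ j = ((X + C b) ^ j).map (algebraMap K R) := by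
      simp [Polynomial.map_pow]
    ext k
    rw [mapLinear_monomial, taylor_monomial, taylor_monomial, hpow, coeff_mapLinear, coeff_C_mul,
      coeff_map, mul_comm, ← Algebra.smul_def, L.map_smul, coeff_C_mul, smul_eq_mul, mul_comm]

end Polynomial

theorem Finset.sum_piFinset_succ {α M : Type*} [DecidableEq α] [AddCommMonoid M] {n : ℕ}
    (S : Finset α) (g : (Fin (n + 1) → α) → M) :
    ∑ p ∈ Fintype.piFinset (fun _ => S), g p =
      ∑ a ∈ Fintype.piFinset (fun _ : Fin n => S), ∑ b ∈ S, g (Fin.cons b a) := by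
  have := Finset.filter_piFinset_eq_map_consEquiv (fun _ : Fin (n + 1) => S) (fun _ => True)
  simp only [Finset.filter_true] at this
  rw [this, Finset.sum_map, Finset.sum_product_right]
  rfl

section Multiplicity

open Finset MvPolynomial Polynomial

variable {F : Type*} [Field F] {n : ℕ}

theorem polyMult_le_of_mem_support {f : MvPolynomial (Fin n) F} {p : Fin n → F}
    {m : Fin n →₀ ℕ} (hm : m ∈ (shift p f).support) : polyMult f p ≤ ∑ i, m i :=
  Nat.sInf_le ⟨m, hm, rfl⟩

theorem exists_mem_support_sum_eq_polyMult {f : MvPolynomial (Fin n) F} (hf : f ≠ 0)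
    (p : Fin n → F) : ∃ m ∈ (shift p f).support, ∑ i, m i = polyMult f p := by
  obtain ⟨m, hm⟩ := support_nonempty.2 ((map_ne_zero_iff _ (shift_injective p)).2 hf)
  exact Nat.sInf_mem (s := {k | ∃ m ∈ (shift p f).support, ∑ i, m i = k}) ⟨_, m, hm, rfl⟩

theorem polyMult_fin_zero (f : MvPolynomial (Fin 0) F) (p : Fin 0 → F) : polyMult f p = 0 :=
  Nat.eq_zero_of_le_zero <| by
    rcases eq_or_ne f 0 with rfl | hf
    · simp [polyMult]
    · obtain ⟨m, hm, hsum⟩ := exists_mem_support_sum_eq_polyMult hf p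
      simp [← hsum]

theorem exists_polyMult_cons_le {f : MvPolynomial (Fin (n + 1)) F} (hf : f ≠ 0)
    (a : Fin n → F) :
    ∃ h : F[X], h.natDegree ≤ (finSuccEquiv F n f).natDegree ∧ ∀ b : F,
      polyMult f (Fin.cons b a) ≤
        polyMult (finSuccEquiv F n f).leadingCoeff a + h.rootMultiplicity b := by
  set Q := finSuccEquiv F n f
  have hQ : Q ≠ 0 := (map_ne_zero_iff _ (finSuccEquiv F n).injective).2 hf
  obtain ⟨α, hα, hα_sum⟩ := exists_mem_support_sum_eq_polyMult (leadingCoeff_ne_zero.2 hQ) a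
  set h := mapLinear (MvPolynomial.lcoeff F α) (Q.map (shift a))
  have hcoeff (j : ℕ) : h.coeff j = (shift a (Q.coeff j)).coeff α := by simp [h]
  have h_ne : h ≠ 0 := fun h0 => by
    have hlc := hcoeff Q.natDegree
    rw [h0, Polynomial.coeff_zero] at hlc
    exact MvPolynomial.mem_support_iff.1 hα hlc.symm
  refine ⟨h, natDegree_le_iff_coeff_eq_zero.2 fun j hj => ?_, fun b => ?_⟩
  · rw [hcoeff, Polynomial.coeff_eq_zero_of_natDegree_lt hj, map_zero, MvPolynomial.coeff_zero]
  have hsupp : Finsupp.cons (h.rootMultiplicity b) α ∈ (shift (Fin.cons b a) f).support := by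
    rw [MvPolynomial.mem_support_iff, ← finSuccEquiv_coeff_coeff, finSuccEquiv_shift_cons,
      ← MvPolynomial.lcoeff_apply, ← coeff_mapLinear, ← MvPolynomial.algebraMap_eq,
      mapLinear_taylor, rootMultiplicity_eq_natTrailingDegree, ← taylor_apply]
    exact trailingCoeff_nonzero_iff_nonzero.2 ((map_ne_zero_iff _ (taylor_injective b)).2 h_ne)
  calc polyMult f (Fin.cons b a) ≤ ∑ i, Finsupp.cons (h.rootMultiplicity b) α i :=
        polyMult_le_of_mem_support hsupp
    _ = _ := by simp [Fin.sum_univ_succ, hα_sum, add_comm]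

theorem sum_polyMult_cons_le {f : MvPolynomial (Fin (n + 1)) F} (hf : f ≠ 0)
    (a : Fin n → F) (S : Finset F) :
    ∑ b ∈ S, polyMult f (Fin.cons b a) ≤
      #S * polyMult (finSuccEquiv F n f).leadingCoeff a + (finSuccEquiv F n f).natDegree := by
  obtain ⟨h, hdeg, hle⟩ := exists_polyMult_cons_le hf a
  calc ∑ b ∈ S, polyMult f (Fin.cons b a)
      ≤ ∑ b ∈ S, (polyMult (finSuccEquiv F n f).leadingCoeff a + h.rootMultiplicity b) :=
        sum_le_sum fun b _ => hle b
    _ = #S * polyMult (finSuccEquiv F n f).leadingCoeff a + ∑ b ∈ S, h.rootMultiplicity b := by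
        rw [sum_add_distrib, sum_const, smul_eq_mul]
    _ ≤ _ := Nat.add_le_add_left ((sum_rootMultiplicity_le_natDegree h S).trans hdeg) _

theorem sum_polyMult_le_totalDegree_mul [DecidableEq F] (S : Finset F)
    {f : MvPolynomial (Fin n) F} (hf : f ≠ 0) :
    ∑ p ∈ Fintype.piFinset (fun _ => S), polyMult f p ≤ f.totalDegree * #S ^ (n - 1) := by
  induction n with
  | zero => simp [polyMult_fin_zero]
  | succ n ih =>
    set Q := finSuccEquiv F n f
    have hlc : Q.leadingCoeff ≠ 0 :=
      leadingCoeff_ne_zero.2 ((map_ne_zero_iff _ (finSuccEquiv F n).injective).2 hf)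
    have hdeg : Q.leadingCoeff.totalDegree + Q.natDegree ≤ f.totalDegree :=
      totalDegree_coeff_finSuccEquiv_add_le f _ hlc
    have ih' : #S * ∑ a ∈ Fintype.piFinset (fun _ => S), polyMult Q.leadingCoeff a ≤
        Q.leadingCoeff.totalDegree * #S ^ n := by
      rcases n with _ | n
      · simp [polyMult_fin_zero]
      · simpa [pow_succ', mul_left_comm] using Nat.mul_le_mul_left #S (ih hlc)
    calc ∑ p ∈ Fintype.piFinset (fun _ => S), polyMult f p
        = ∑ a ∈ Fintype.piFinset (fun _ => S), ∑ b ∈ S, polyMult f (Fin.cons b a) :=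
          sum_piFinset_succ S _
      _ ≤ ∑ a ∈ Fintype.piFinset (fun _ => S), (#S * polyMult Q.leadingCoeff a + Q.natDegree) :=
          sum_le_sum fun a _ => sum_polyMult_cons_le hf a S
      _ = #S * ∑ a ∈ Fintype.piFinset (fun _ => S), polyMult Q.leadingCoeff a +
            Q.natDegree * #S ^ n := by
          rw [sum_add_distrib, ← mul_sum, sum_const, Fintype.card_piFinset_const, smul_eq_mul,
            mul_comm (#S ^ n)]
      _ ≤ (Q.leadingCoeff.totalDegree + Q.natDegree) * #S ^ n := by
          rw [add_mul]
          exact Nat.add_le_add_right ih' _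
      _ ≤ f.totalDegree * #S ^ (n + 1 - 1) := Nat.mul_le_mul_right _ hdeg

end Multiplicity

theorem statement_7_general (F : Type*) [Field F] [DecidableEq F] (n : ℕ)
    (f : MvPolynomial (Fin n) F) (hf : f ≠ 0) (d : ℕ) (hd : f.totalDegree = d)
    (S : Finset F) :
    ∑ p ∈ Fintype.piFinset (fun _ : Fin n => S), polyMult f p ≤
      d * S.card ^ (n - 1) :=
  hd ▸ sum_polyMult_le_totalDegree_mul S hf

/-- Multiplicity Schwartz–Zippel: if `f ≠ 0` has total degree `d`,
then `∑_{p ∈ S^n} mult(f, p) ≤ d · |S|^{n−1}`. -/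
theorem statement_7 (F : Type*) [Field F] [DecidableEq F] (n : ℕ) (hn : 1 ≤ n)
    (f : MvPolynomial (Fin n) F) (hf : f ≠ 0) (d : ℕ) (hd : f.totalDegree = d)
    (S : Finset F) :
    ∑ p ∈ Fintype.piFinset (fun _ : Fin n => S), polyMult f p ≤
      d * S.card ^ (n - 1) :=
  statement_7_general F n f hf d hd S
end

section
/- Let B : U × V → W be a bilinear map of finite-dimensional vector spaces over a finite field F_q, and let Z = {(x,y) ∈ U × V : B(x,y) = 0}. Then (1/|Z|) · ∑_{(x,y) ∈ Z} rank B(x,−) ≤ log_q(|U| · |V| / |Z|). -/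
open MvPolynomial

open Classical in
/-- For a bilinear map `B : U × V → W` over `F_q` with zero set `Z`,
`(1/|Z|) ∑_{(x,y) ∈ Z} rank B(x,−) ≤ log_q(|U|·|V|/|Z|)`. -/
theorem statement_10 (F : Type*) [Field F] [Fintype F]
    (U V W : Type*) [AddCommGroup U] [Module F U] [Fintype U]
    [AddCommGroup V] [Module F V] [Fintype V]
    [AddCommGroup W] [Module F W]
    (B : U →ₗ[F] V →ₗ[F] W) :
    (1 / (Fintype.card {p : U × V // B p.1 p.2 = 0} : ℝ)) *
        ∑ p : {p : U × V // B p.1 p.2 = 0},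
          (Module.finrank F (LinearMap.range (B (p : U × V).1)) : ℝ) ≤
      Real.logb (Fintype.card F)
        ((Fintype.card U : ℝ) * (Fintype.card V : ℝ) /
          (Fintype.card {p : U × V // B p.1 p.2 = 0} : ℝ)) := by
  classical
  have hFD : FiniteDimensional F V := Module.Finite.of_finite
  set q : ℕ := Fintype.card F with hqdef
  have hq1 : 1 < q := Fintype.one_lt_card
  have hq0 : (0:ℝ) < (q:ℝ) := by positivity
  set N : ℕ := Module.finrank F V with hNdef
  set r : U → ℕ := fun x => Module.finrank F (LinearMap.range (B x)) with hrdef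
  have hrN : ∀ x, r x ≤ N := fun x => (LinearMap.finrank_range_le (B x))
  -- fiber cardinality
  have hker : ∀ x : U, Fintype.card {y : V // B x y = 0} = q ^ (N - r x) := by
    intro x
    have e : {y : V // B x y = 0} ≃ LinearMap.ker (B x) :=
      Equiv.subtypeEquivRight (fun y => (LinearMap.mem_ker).symm)
    rw [Fintype.card_congr e, Module.card_eq_pow_finrank (K := F)]
    congr 1
    have h1 : r x + Module.finrank F (LinearMap.ker (B x)) = N :=
      LinearMap.finrank_range_add_finrank_ker (B x)
    omega
  -- card Z
  have hZcard : Fintype.card {p : U × V // B p.1 p.2 = 0} = ∑ x : U, q ^ (N - r x) := by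
    rw [Fintype.card_congr (Equiv.subtypeProdEquivSigmaSubtype (fun (x : U) (y : V) => B x y = 0)),
      Fintype.card_sigma]
    exact Finset.sum_congr rfl fun x _ => hker x
  -- sum over Z
  have hZsum : ∑ p : {p : U × V // B p.1 p.2 = 0},
      (Module.finrank F (LinearMap.range (B (p : U × V).1)) : ℝ)
      = ∑ x : U, ((q:ℝ)) ^ (N - r x) * (r x : ℝ) := by
    have step : ∑ p : {p : U × V // B p.1 p.2 = 0},
        (Module.finrank F (LinearMap.range (B (p : U × V).1)) : ℝ)
        = ∑ s : Σ x : U, {y : V // B x y = 0}, (r s.1 : ℝ) :=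
      Fintype.sum_equiv (Equiv.subtypeProdEquivSigmaSubtype (fun (x : U) (y : V) => B x y = 0))
        _ _ (fun p => rfl)
    rw [step, ← Finset.univ_sigma_univ, Finset.sum_sigma]
    refine Finset.sum_congr rfl fun x _ => ?_
    simp only [Finset.sum_const, Finset.card_univ, hker x, nsmul_eq_mul]
    push_cast
    ring
  have hZpos : 0 < Fintype.card {p : U × V // B p.1 p.2 = 0} :=
    Fintype.card_pos_iff.mpr ⟨⟨(0,0), by simp⟩⟩
  set A : ℝ := (Fintype.card {p : U × V // B p.1 p.2 = 0} : ℝ) with hAdef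
  have hApos : 0 < A := by rw [hAdef]; exact_mod_cast hZpos
  have hA : A = ∑ x : U, ((q:ℝ)) ^ (N - r x) := by
    rw [hAdef, hZcard]; push_cast; ring
  have hcardV : (Fintype.card V : ℝ) = (q:ℝ) ^ N := by
    exact_mod_cast (Module.card_eq_pow_finrank (K := F) (V := V))
  have hlogq : 0 < Real.log q := Real.log_pos (by exact_mod_cast hq1)
  have hkey : ∀ x : U, ((q:ℝ)) ^ (N - r x) * ((q:ℝ)) ^ (r x) = (q:ℝ) ^ N := fun x => by
    rw [← pow_add, Nat.sub_add_cancel (hrN x)]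
  have jensen := (strictConcaveOn_log_Ioi.concaveOn).le_map_sum
    (t := Finset.univ) (w := fun x : U => (q:ℝ) ^ (N - r x) / A)
    (p := fun x : U => (q:ℝ) ^ (r x))
    (fun i _ => by positivity)
    (by rw [← Finset.sum_div, ← hA, div_self hApos.ne'])
    (fun i _ => Set.mem_Ioi.mpr (by positivity))
  simp only [smul_eq_mul] at jensen
  rw [Real.logb, hZsum, le_div_iff₀ hlogq]
  calc (1 / A * ∑ x : U, ((q:ℝ)) ^ (N - r x) * (r x : ℝ)) * Real.log q
      = ∑ x : U, (q:ℝ) ^ (N - r x) / A * Real.log ((q:ℝ) ^ (r x)) := by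
        simp only [Real.log_pow]
        rw [Finset.mul_sum, Finset.sum_mul]
        exact Finset.sum_congr rfl fun x _ => by ring
    _ ≤ Real.log (∑ x : U, (q:ℝ) ^ (N - r x) / A * (q:ℝ) ^ (r x)) := jensen
    _ = Real.log ((Fintype.card U : ℝ) * (Fintype.card V : ℝ) / A) := by
        congr 1
        have : ∀ x : U, (q:ℝ) ^ (N - r x) / A * (q:ℝ) ^ (r x) = (q:ℝ) ^ N / A := fun x => by
          rw [div_mul_eq_mul_div, hkey x]
        rw [Finset.sum_congr rfl fun x _ => this x, Finset.sum_const, Finset.card_univ,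
          nsmul_eq_mul, hcardV]
        ring
end

section
/- For every finite field F_q, every integer d ≥ 1, and every ε > 0, there exist n ≥ 1 and a nonzero M_d-matrix M over F_q such that MaxR(M) < ((1 − 1/q)^d + ε) · CR(M). In particular, the constant (1 − 1/q)^d in the inequality E_p[rank M(p)] ≥ (1 − 1/q)^d CR(M) cannot be improved. -/
open MvPolynomial

/-! The extremal matrix is diagonal, indexed by `t ∈ (F^n)^d`, with entries `∏ᵢ ⟨xᵢ, tᵢ⟩`.
Generically every entry with all `tᵢ ≠ 0` is nonzero, so `CR = (q^n - 1)^d`. At a point `p`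
the surviving entries are those with `⟨pᵢ, tᵢ⟩ ≠ 0` for all `i`; a nonzero functional vanishes
on `q^(n-1)` vectors, so at most `((1 - 1/q) q^n)^d` survive. The ratio of the two bounds is
`(1 - 1/q)^d / (1 - q⁻ⁿ)^d`, which tends to `(1 - 1/q)^d` as `n → ∞`. -/

lemma Matrix.rank_map_reindex_diagonal {T ι R K : Type*} [Fintype T] [DecidableEq T]
    [Fintype ι] [DecidableEq ι] [CommRing R] [Field K]
    (f : R →+* K) (e : T ≃ ι) (w : T → R) :
    ((Matrix.reindex e e (Matrix.diagonal w)).map f).rank = Nat.card {t // f (w t) ≠ 0} := by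
  classical
  rw [Matrix.reindex_apply, ← Matrix.submatrix_map, Matrix.diagonal_map (map_zero f),
    Matrix.rank_submatrix, Matrix.rank_diagonal, Nat.card_eq_fintype_card]

lemma Nat.card_subtype_forall_pi {ι : Type*} [Fintype ι] {β : ι → Type*}
    (P : ∀ i, β i → Prop) :
    Nat.card {t : ∀ i, β i // ∀ i, P i (t i)} = ∏ i, Nat.card {x // P i x} := by
  rw [Nat.card_congr Equiv.subtypePiEquivPi, Nat.card_pi]

lemma Module.Dual.card_apply_ne_zero_le {K V : Type*} [Field K] [Fintype K] [AddCommGroup V]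
    [Module K V] [Fintype V] (f : Module.Dual K V) :
    (Nat.card {v // f v ≠ 0} : ℝ) ≤
      (1 - 1 / Fintype.card K) * (Fintype.card K : ℝ) ^ Module.finrank K V := by
  classical
  rcases eq_or_ne f 0 with rfl | hf
  · have hq : (1 : ℝ) ≤ Fintype.card K := mod_cast Fintype.card_pos
    have hnonneg : (0 : ℝ) ≤ 1 - 1 / Fintype.card K :=
      sub_nonneg.2 (div_le_one_of_le₀ hq (by positivity))
    simpa using mul_nonneg hnonneg (by positivity)
  set q := Fintype.card K
  set k := Module.finrank K (LinearMap.ker f)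
  have hker : Fintype.card {v // f v = 0} = q ^ k := by
    rw [← Nat.card_eq_fintype_card, ← Module.card_eq_pow_finrank, ← Nat.card_eq_fintype_card]
    rfl
  have hcard : Nat.card {v // f v ≠ 0} = q ^ (k + 1) - q ^ k := by
    rw [Nat.card_eq_fintype_card, Fintype.card_subtype_compl, hker,
      Module.card_eq_pow_finrank (K := K) (V := V), ← Module.Dual.finrank_ker_add_one_of_ne_zero hf]
  have hq0 : (q : ℝ) ≠ 0 := by positivity
  refine le_of_eq ?_
  calc (Nat.card {v // f v ≠ 0} : ℝ) = q ^ (k + 1) - q ^ k := by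
        rw [hcard, Nat.cast_sub (Nat.pow_le_pow_right Fintype.card_pos (k.le_add_right 1)),
          Nat.cast_pow, Nat.cast_pow]
    _ = (1 - 1 / q) * q ^ Module.finrank K V := by
        rw [← Module.Dual.finrank_ker_add_one_of_ne_zero hf]
        field_simp
        ring

open Filter in
lemma eventually_mul_pow_lt_mul_sub_one_pow {q : ℝ} (hq : 1 < q) (d : ℕ) {c ε : ℝ}
    (hc : 0 ≤ c) (hε : 0 < ε) :
    ∀ᶠ n : ℕ in atTop, c * (q ^ n) ^ d < (c + ε) * (q ^ n - 1) ^ d := by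
  have hlim : Tendsto (fun n : ℕ => (1 - q⁻¹ ^ n) ^ d) atTop (nhds 1) := by
    simpa using ((tendsto_pow_atTop_nhds_zero_of_lt_one (inv_nonneg.2 (by linarith))
      (inv_lt_one_of_one_lt₀ hq)).const_sub 1).pow d
  have hratio : c / (c + ε) < 1 := (div_lt_one (by linarith)).2 (by linarith)
  filter_upwards [hlim.eventually (lt_mem_nhds hratio)] with n hn
  have hqn : 0 < q ^ n := pow_pos (by linarith) n
  have hfactor : q ^ n - 1 = q ^ n * (1 - q⁻¹ ^ n) := by
    rw [inv_pow, mul_sub, mul_inv_cancel₀ hqn.ne', mul_one]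
  rw [hfactor, mul_pow, mul_comm (c + ε), mul_assoc, mul_comm c]
  refine mul_lt_mul_of_pos_left ?_ (pow_pos hqn d)
  rw [div_lt_iff₀ (by linarith)] at hn
  linarith

section Construction

variable {F : Type*} [Field F]

lemma isMultilinearOn_zero {d n : ℕ} (S : Finset (Fin d)) :
    IsMultilinearOn S (0 : MvPolynomial (Fin d × Fin n) F) := by
  simp [IsMultilinearOn]

lemma isMultilinear_of_isWeightedHomogeneous {d n : ℕ} {f : MvPolynomial (Fin d × Fin n) F}
    (hf : ∀ i, IsWeightedHomogeneous (fun v : Fin d × Fin n => if v.1 = i then 1 else 0) f 1) :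
    IsMultilinear f := by
  intro m hm i
  have hi := hf i (mem_support_iff.mp hm)
  rw [Finsupp.weight_apply, Finsupp.sum_fintype _ _ (by simp), Fintype.sum_prod_type] at hi
  simpa using hi

noncomputable def prodPairing {d n : ℕ} (t : Fin d → Fin n → F) :
    MvPolynomial (Fin d × Fin n) F :=
  ∏ i, ∑ j, X (i, j) * C (t i j)

lemma isWeightedHomogeneous_prodPairing {d n : ℕ} (t : Fin d → Fin n → F) (i : Fin d) :
    IsWeightedHomogeneous (fun v : Fin d × Fin n => if v.1 = i then 1 else 0)
      (prodPairing t) 1 := by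
  have hfactor : ∀ k, IsWeightedHomogeneous (fun v : Fin d × Fin n => if v.1 = i then 1 else 0)
      (∑ j, X (k, j) * C (t k j)) (if k = i then 1 else 0) := fun k =>
    IsWeightedHomogeneous.sum _ _ _ fun j _ => by
      simpa using (isWeightedHomogeneous_X F _ (k, j)).mul (isWeightedHomogeneous_C _ (t k j))
  simpa [prodPairing] using IsWeightedHomogeneous.prod Finset.univ _ _ fun k _ => hfactor k

lemma isMultilinear_prodPairing {d n : ℕ} (t : Fin d → Fin n → F) :
    IsMultilinear (prodPairing t) :=
  isMultilinear_of_isWeightedHomogeneous (isWeightedHomogeneous_prodPairing t)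

lemma eval_prodPairing {d n : ℕ} (t p : Fin d → Fin n → F) :
    eval (fun v => p v.1 v.2) (prodPairing t) = ∏ i, p i ⬝ᵥ t i := by
  simp [prodPairing, dotProduct]

lemma prodPairing_ne_zero_iff {d n : ℕ} (t : Fin d → Fin n → F) :
    prodPairing t ≠ 0 ↔ ∀ i, t i ≠ 0 := by
  refine ⟨fun h i hi => h (Finset.prod_eq_zero (Finset.mem_univ i) (by simp [hi])), fun ht => ?_⟩
  choose j hj using fun i => Function.ne_iff.mp (ht i)
  intro h
  have heval := eval_prodPairing t fun i => Pi.single (j i) 1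
  rw [h, map_zero, eq_comm, Finset.prod_eq_zero_iff] at heval
  obtain ⟨i, -, hi⟩ := heval
  exact hj i (by simpa using hi)

end Construction

section PairingMatrix

variable (F : Type*) [Field F] [Fintype F]

open Classical in
noncomputable def pairingMatrix (d n : ℕ) :
    Matrix (Fin (Fintype.card (Fin d → Fin n → F))) (Fin (Fintype.card (Fin d → Fin n → F)))
      (MvPolynomial (Fin d × Fin n) F) :=
  Matrix.reindex (Fintype.equivFin _) (Fintype.equivFin _) (Matrix.diagonal prodPairing)

open Classical in
lemma isMultilinear_pairingMatrix (d n : ℕ) (i j) : IsMultilinear (pairingMatrix F d n i j) := by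
  rw [pairingMatrix, Matrix.reindex_apply, Matrix.submatrix_apply, Matrix.diagonal_apply]
  split_ifs
  · exact isMultilinear_prodPairing _
  · exact isMultilinearOn_zero _

lemma CR_pairingMatrix (d n : ℕ) : CR (pairingMatrix F d n) = (Fintype.card F ^ n - 1) ^ d := by
  classical
  have hne : ∀ t, algebraMap (MvPolynomial (Fin d × Fin n) F)
      (FractionRing (MvPolynomial (Fin d × Fin n) F)) (prodPairing t) ≠ 0 ↔ ∀ i, t i ≠ 0 :=
    fun t => (map_ne_zero_iff _ (IsFractionRing.injective _ _)).trans (prodPairing_ne_zero_iff t)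
  rw [CR, pairingMatrix, Matrix.rank_map_reindex_diagonal,
    Nat.card_congr (Equiv.subtypeEquivRight hne), Nat.card_subtype_forall_pi fun _ s => s ≠ 0]
  simp [Nat.card_eq_fintype_card, Fintype.card_subtype_compl]

lemma MaxR_pairingMatrix_le (d n : ℕ) :
    (MaxR (pairingMatrix F d n) : ℝ) ≤
      ((1 - 1 / Fintype.card F) * (Fintype.card F : ℝ) ^ n) ^ d := by
  classical
  obtain ⟨p, hp⟩ :=
    exists_eq_ciSup_of_finite (f := fun p => (evalMat (pairingMatrix F d n) p).rank)
  have hne (t) : eval (fun v => p v.1 v.2) (prodPairing t) ≠ 0 ↔ ∀ i, p i ⬝ᵥ t i ≠ 0 := by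
    rw [eval_prodPairing, Finset.prod_ne_zero_iff]
    simp
  rw [MaxR, ← hp, evalMat, pairingMatrix, Matrix.rank_map_reindex_diagonal,
    Nat.card_congr (Equiv.subtypeEquivRight hne),
    Nat.card_subtype_forall_pi fun i s => p i ⬝ᵥ s ≠ 0, Nat.cast_prod, ← Fin.prod_const]
  refine Finset.prod_le_prod (fun _ _ => Nat.cast_nonneg _) fun i _ => ?_
  simpa using Module.Dual.card_apply_ne_zero_le (dotProductBilin F F (p i))

end PairingMatrix

theorem statement_12_general (F : Type*) [Field F] [Fintype F] (d : ℕ)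
    (ε : ℝ) (hε : 0 < ε) :
    ∃ (n a b : ℕ), 1 ≤ n ∧
      ∃ M : Matrix (Fin a) (Fin b) (MvPolynomial (Fin d × Fin n) F),
        (∀ i j, IsMultilinear (M i j)) ∧ M ≠ 0 ∧
        (MaxR M : ℝ) < ((1 - 1 / (Fintype.card F : ℝ)) ^ d + ε) * (CR M : ℝ) := by
  have hq : (1 : ℝ) < Fintype.card F := mod_cast Fintype.one_lt_card
  have hc : 0 ≤ (1 - 1 / (Fintype.card F : ℝ)) ^ d :=
    pow_nonneg (sub_nonneg.2 ((div_le_one (by linarith)).2 hq.le)) d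
  obtain ⟨n, hlt, hn⟩ :=
    ((eventually_mul_pow_lt_mul_sub_one_pow hq d hc hε).and (Filter.eventually_ge_atTop 1)).exists
  have hM : (MaxR (pairingMatrix F d n) : ℝ) <
      ((1 - 1 / (Fintype.card F : ℝ)) ^ d + ε) * (CR (pairingMatrix F d n) : ℝ) := by
    rw [CR_pairingMatrix, Nat.cast_pow, Nat.cast_sub (Nat.one_le_pow _ _ Fintype.card_pos)]
    push_cast
    calc (MaxR (pairingMatrix F d n) : ℝ)
        ≤ ((1 - 1 / Fintype.card F) * (Fintype.card F : ℝ) ^ n) ^ d := MaxR_pairingMatrix_le F d n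
      _ < _ := by rwa [mul_pow]
  refine ⟨n, _, _, hn, pairingMatrix F d n, isMultilinear_pairingMatrix F d n, ?_, hM⟩
  -- `CR 0 = 0`, so the strict inequality rules out `M = 0`
  intro h
  simp only [h, CR, Matrix.map_zero, map_zero, Matrix.rank_zero, Nat.cast_zero, mul_zero] at hM
  exact (Nat.cast_nonneg _).not_gt hM

/-- For every finite field, `d ≥ 1` and `ε > 0`, there is a nonzero
matrix of multilinear forms with `MaxR(M) < ((1 − 1/q)^d + ε) · CR(M)`. -/
theorem statement_12 (F : Type*) [Field F] [Fintype F] (d : ℕ) (hd : 1 ≤ d)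
    (ε : ℝ) (hε : 0 < ε) :
    ∃ (n a b : ℕ), 1 ≤ n ∧
      ∃ M : Matrix (Fin a) (Fin b) (MvPolynomial (Fin d × Fin n) F),
        (∀ i j, IsMultilinear (M i j)) ∧ M ≠ 0 ∧
        (MaxR M : ℝ) < ((1 - 1 / (Fintype.card F : ℝ)) ^ d + ε) * (CR M : ℝ) :=
  statement_12_general F d ε hε
end

section
/- Let F be any field and M an M_d-matrix over F with CR(M) = MaxR(M) = r. Then PR(M) ≤ 2^d · r. -/
open MvPolynomial

/-!
Pick a point `p` with `rank M(p) = r` and an `r × r` submatrix `A` with `det A(p) ≠ 0`. Since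
`CR(M) = r`, over the fraction field every column of `M` is a combination of the columns through
`A`; clearing denominators gives `det A • M = C * adj A * B` over the polynomial ring. After the
translation `x ↦ x + p`, `δ = det A` has a nonzero constant term, hence is invertible modulo the
`(d+1)`-st power of the ideal of the variables, and `M(x + p) ≡ U * B` modulo monomials of total
degree `> d`. Translation only lowers exponents, so the part of `M(x + p)` of degree one in every
block is `M` itself; that part of a product `u * v` splits as `∑ S, u_S * v_Sᶜ`, where `u_S` has
degree one in the blocks of `S` and zero elsewhere. With `r` products this gives `2^d * r` terms.
-/

namespace MvPolynomial

section Shift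

open Finsupp

variable {σ R : Type*} [CommRing R]

def IsTopMonomial (m : σ →₀ ℕ) (q : MvPolynomial σ R) : Prop :=
  (∀ e ∈ q.support, e ≤ m) ∧ coeff m q = 1

theorem isTopMonomial_one : IsTopMonomial (0 : σ →₀ ℕ) (1 : MvPolynomial σ R) := by
  classical
  refine ⟨fun e he => ?_, coeff_zero_one⟩
  rw [mem_support_iff, coeff_one, ite_ne_right_iff] at he
  exact he.1.symm.le

theorem IsTopMonomial.mul {m m' : σ →₀ ℕ} {q q' : MvPolynomial σ R}
    (h : IsTopMonomial m q) (h' : IsTopMonomial m' q') : IsTopMonomial (m + m') (q * q') := by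
  classical
  refine ⟨fun e he => ?_, ?_⟩
  · obtain ⟨e₁, he₁, e₂, he₂, rfl⟩ := Finset.mem_add.mp (support_mul q q' he)
    exact add_le_add (h.1 e₁ he₁) (h'.1 e₂ he₂)
  · rw [coeff_mul, Finset.sum_eq_single (m, m'), h.2, h'.2, one_mul]
    · rintro ⟨e₁, e₂⟩ he hne
      by_contra hc
      obtain ⟨h₁, h₂⟩ := ne_zero_and_ne_zero_of_mul hc
      have := (add_eq_add_iff_eq_and_eq (h.1 e₁ (mem_support_iff.mpr h₁))
        (h'.1 e₂ (mem_support_iff.mpr h₂))).mp (Finset.HasAntidiagonal.mem_antidiagonal.mp he)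
      exact hne (Prod.ext this.1 this.2)
    · simp

theorem IsTopMonomial.pow {m : σ →₀ ℕ} {q : MvPolynomial σ R} (h : IsTopMonomial m q) (k : ℕ) :
    IsTopMonomial (k • m) (q ^ k) := by
  induction k with
  | zero => simpa using isTopMonomial_one
  | succ k ih => simpa [succ_nsmul, pow_succ] using ih.mul h

theorem isTopMonomial_X_add_C [Nontrivial R] (v : σ) (a : R) :
    IsTopMonomial (single v 1) (X v + C a) := by
  classical
  refine ⟨fun e he => ?_, by simp [coeff_X, coeff_C, (single_ne_zero.mpr one_ne_zero).symm]⟩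
  rcases Finset.mem_union.mp (support_add he) with h | h
  · rw [support_X, Finset.mem_singleton] at h
    exact h.le
  · rw [mem_support_iff, coeff_C, ite_ne_right_iff] at h
    rw [← h.1]
    exact zero_le

theorem isTopMonomial_aeval_X_add_C_monomial [Nontrivial R] (c : σ → R) (m : σ →₀ ℕ) :
    IsTopMonomial m (aeval (fun v => X v + C (c v)) (monomial m (1 : R))) := by
  induction m using Finsupp.induction with
  | zero => simpa using isTopMonomial_one
  | single_add v k m _ _ ih =>
    rw [← mul_one (1 : R), ← monomial_mul, map_mul, ← X_pow_eq_monomial, map_pow, aeval_X]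
    simpa using (isTopMonomial_X_add_C v (c v)).pow k |>.mul ih

theorem weightedHomogeneousComponent_aeval_X_add_C [Nontrivial R] {M : Type*} [AddCommMonoid M]
    [PartialOrder M] [IsOrderedAddMonoid M] [CanonicallyOrderedAdd M] [IsLeftCancelAdd M]
    [DecidableEq M] {w : σ → M} [Finsupp.NonTorsionWeight ℕ w] {μ : M} {f : MvPolynomial σ R}
    (hf : IsWeightedHomogeneous w f μ) (c : σ → R) :
    weightedHomogeneousComponent w μ (aeval (fun v => X v + C (c v)) f) = f := by
  classical
  ext e
  rw [coeff_weightedHomogeneousComponent]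
  split_ifs with he
  · have hterm : ∀ m ∈ f.support,
        coeff e (aeval (fun v => X v + C (c v)) (monomial m (coeff m f))) =
          if m = e then coeff m f else 0 := by
      intro m hm
      have htop := isTopMonomial_aeval_X_add_C_monomial c m
      rw [← mul_one (coeff m f), ← C_mul_monomial, map_mul, aeval_C, algebraMap_eq, coeff_C_mul]
      split_ifs with hme
      · subst hme; rw [htop.2, mul_one]
      · refine mul_eq_zero_of_right _ (not_ne_iff.mp fun hne => hme ?_)
        -- `e ≤ m` and both have weight `μ`, so they differ by an exponent of weight zero
        obtain ⟨k, rfl⟩ := le_iff_exists_add.mp (htop.1 e (mem_support_iff.mpr hne))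
        have hk : weight w k = 0 := by
          have := hf (mem_support_iff.mp hm)
          rwa [map_add, he, add_eq_left] at this
        rw [(weight_eq_zero_iff_eq_zero w).mp hk, add_zero]
    conv_lhs => rw [f.as_sum]
    rw [map_sum, coeff_sum, Finset.sum_congr rfl hterm, Finset.sum_ite_eq']
    split_ifs with hmem
    · rfl
    · exact (notMem_support_iff.mp hmem).symm
  · exact (hf.coeff_eq_zero e he).symm

theorem constantCoeff_aeval_X_add_C (c : σ → R) (f : MvPolynomial σ R) :
    constantCoeff (aeval (fun v => X v + C (c v)) f) = eval c f := by
  induction f using MvPolynomial.induction_on <;> simp_all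

end Shift

theorem mem_idealOfVars_iff {σ R : Type*} [CommSemiring R] {f : MvPolynomial σ R} :
    f ∈ idealOfVars σ R ↔ constantCoeff f = 0 := by
  rw [← pow_one (idealOfVars σ R), mem_pow_idealOfVars_iff', constantCoeff_eq]
  simp [Finsupp.degree_eq_zero_iff]

end MvPolynomial

theorem Ideal.exists_mul_sub_one_mem_pow {R : Type*} [CommRing R] {I : Ideal R} {x : R}
    (hx : 1 - x ∈ I) (k : ℕ) : ∃ u, u * x - 1 ∈ I ^ k := by
  refine ⟨∑ i ∈ Finset.range k, (1 - x) ^ i, ?_⟩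
  have h := geom_sum_mul_neg (1 - x) k
  rw [sub_sub_cancel] at h
  rw [h, sub_sub_cancel_left]
  exact neg_mem (Ideal.pow_mem_pow hx k)

theorem MvPolynomial.exists_mul_sub_one_mem_pow_idealOfVars {σ F : Type*} [Field F]
    {δ : MvPolynomial σ F} (hδ : constantCoeff δ ≠ 0) (k : ℕ) :
    ∃ u, u * δ - 1 ∈ idealOfVars σ F ^ k := by
  have h : 1 - C (constantCoeff δ)⁻¹ * δ ∈ idealOfVars σ F := by
    simp [mem_idealOfVars_iff, hδ]
  obtain ⟨u, hu⟩ := Ideal.exists_mul_sub_one_mem_pow h k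
  exact ⟨u * C (constantCoeff δ)⁻¹, by rwa [mul_assoc]⟩

namespace Matrix

section Field

variable {K : Type*} [Field K] {α β : Type*} {r : ℕ}

theorem exists_linearIndependent_rows_of_rank_eq [Finite α] [Fintype β] {B : Matrix α β K}
    (hB : B.rank = r) : ∃ ρ : Fin r → α, LinearIndependent K (B.submatrix ρ id).row := by
  obtain ⟨ι, a, ha, hspan, hli⟩ := exists_linearIndependent' K B.row
  have : Finite ι := Finite.of_injective a ha
  cases nonempty_fintype ι
  have hcard : Fintype.card ι = r := by
    rw [linearIndependent_iff_card_eq_finrank_span.mp hli, Set.finrank, hspan,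
      ← rank_eq_finrank_span_row, hB]
  exact ⟨a ∘ (Fintype.equivFinOfCardEq hcard).symm, hli.comp _ (Equiv.injective _)⟩

theorem exists_isUnit_det_submatrix_of_rank_eq [Finite α] [Fintype β] {B : Matrix α β K}
    (hB : B.rank = r) : ∃ (ρ : Fin r → α) (κ : Fin r → β), IsUnit (B.submatrix ρ κ).det := by
  obtain ⟨ρ, hρ⟩ := exists_linearIndependent_rows_of_rank_eq hB
  have hρ' : (B.submatrix ρ id)ᵀ.rank = r := by
    rw [rank_transpose, hρ.rank_matrix, Fintype.card_fin]
  obtain ⟨κ, hκ⟩ := exists_linearIndependent_rows_of_rank_eq hρ'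
  refine ⟨ρ, κ, ?_⟩
  rw [← isUnit_iff_isUnit_det, ← isUnit_transpose]
  exact linearIndependent_rows_iff_isUnit.mp hκ

theorem det_smul_eq_mul_adjugate_mul_of_rank_eq [Fintype α] [Fintype β] {N : Matrix α β K}
    {ρ : Fin r → α} {κ : Fin r → β} (hA : IsUnit (N.submatrix ρ κ).det) (hN : N.rank = r) :
    (N.submatrix ρ κ).det • N =
      N.submatrix id κ * (N.submatrix ρ κ).adjugate * N.submatrix ρ id := by
  set A := N.submatrix ρ κ
  set C := N.submatrix id κ
  have hC : C.rank = r := by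
    refine le_antisymm ((rank_le_card_width C).trans_eq (Fintype.card_fin r)) ?_
    calc r = A.rank := by
          rw [rank_of_isUnit A ((isUnit_iff_isUnit_det A).mpr hA), Fintype.card_fin]
      _ ≤ C.rank := rank_submatrix_le C ρ id
  have hspan : Submodule.span K (Set.range C.col) = Submodule.span K (Set.range N.col) := by
    refine Submodule.eq_of_le_of_finrank_eq (Submodule.span_mono ?_) ?_
    · exact Set.range_comp_subset_range κ N.col
    · rw [← rank_eq_finrank_span_cols, ← rank_eq_finrank_span_cols, hC, hN]
  have hcol : ∀ j, ∃ x : Fin r → K, C *ᵥ x = N.col j := by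
    intro j
    have : N.col j ∈ LinearMap.range C.mulVecLin := by
      rw [range_mulVecLin, hspan]
      exact Submodule.subset_span (Set.mem_range_self j)
    exact this
  choose x hx using hcol
  set X : Matrix (Fin r) β K := of fun s j => x j s
  have hNX : N = C * X := by
    ext i j
    exact (congrFun (hx j) i).symm
  have hBX : N.submatrix ρ id = A * X := by
    rw [hNX]; rfl
  rw [hBX, Matrix.mul_assoc, ← Matrix.mul_assoc A.adjugate, adjugate_mul, Matrix.smul_mul,
    Matrix.one_mul, Matrix.mul_smul, ← hNX]

end Field

theorem det_smul_eq_mul_adjugate_mul_of_rank_map_eq {R : Type*} [CommRing R] [IsDomain R]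
    {α β : Type*} [Fintype α] [Fintype β] {r : ℕ} {M : Matrix α β R} {ρ : Fin r → α}
    {κ : Fin r → β} (hA : (M.submatrix ρ κ).det ≠ 0)
    (hM : (M.map (algebraMap R (FractionRing R))).rank = r) :
    (M.submatrix ρ κ).det • M =
      M.submatrix id κ * (M.submatrix ρ κ).adjugate * M.submatrix ρ id := by
  set φ := algebraMap R (FractionRing R)
  have hφ : Function.Injective φ := IsFractionRing.injective R (FractionRing R)
  have hdet : ((M.submatrix ρ κ).map φ).det = φ (M.submatrix ρ κ).det := (φ.map_det _).symm
  have key := det_smul_eq_mul_adjugate_mul_of_rank_eq (N := M.map φ) (ρ := ρ) (κ := κ)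
    (by rw [submatrix_map, hdet]; exact ((map_ne_zero_iff φ hφ).mpr hA).isUnit) hM
  simp only [submatrix_map, hdet] at key
  apply Matrix.map_injective hφ
  dsimp only
  rw [Matrix.map_mul, Matrix.map_mul, ← RingHom.mapMatrix_apply φ (adjugate _),
    RingHom.map_adjugate, RingHom.mapMatrix_apply, ← key]
  ext
  simp

theorem exists_sub_mul_mem_pow_idealOfVars {σ F : Type*} [Field F] {α β γ : Type*} [Fintype γ]
    {N : Matrix α β (MvPolynomial σ F)} {δ : MvPolynomial σ F}
    {P : Matrix α γ (MvPolynomial σ F)} {Q : Matrix γ β (MvPolynomial σ F)}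
    (hδ : constantCoeff δ ≠ 0) (h : δ • N = P * Q) (k : ℕ) :
    ∃ U : Matrix α γ (MvPolynomial σ F), ∀ i j, N i j - (U * Q) i j ∈ idealOfVars σ F ^ k := by
  obtain ⟨u, hu⟩ := exists_mul_sub_one_mem_pow_idealOfVars hδ k
  refine ⟨u • P, fun i j => ?_⟩
  have h' : N i j - (u • P * Q) i j = -((u * δ - 1) * N i j) := by
    rw [Matrix.smul_mul, ← h, smul_apply, smul_apply, smul_eq_mul, smul_eq_mul]
    ring
  rw [h']
  exact neg_mem (Ideal.mul_mem_right _ _ hu)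

end Matrix

theorem exists_aeval_X_add_C_sub_mul_mem_pow_idealOfVars {σ F : Type*} [Field F]
    {α β : Type*} [Fintype α] [Fintype β] {r : ℕ} {N : Matrix α β (MvPolynomial σ F)}
    (hN : CR N = r) {c : σ → F} {ρ : Fin r → α} {κ : Fin r → β}
    (hc : ((N.submatrix ρ κ).map (eval c)).det ≠ 0) (k : ℕ) :
    ∃ (U : Matrix α (Fin r) (MvPolynomial σ F)) (V : Matrix (Fin r) β (MvPolynomial σ F)),
      ∀ i j, aeval (fun v => X v + C (c v)) (N i j) - (U * V) i j ∈ idealOfVars σ F ^ k := by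
  have hδ : constantCoeff (aeval (fun v => X v + C (c v)) (N.submatrix ρ κ).det) ≠ 0 := by
    rwa [constantCoeff_aeval_X_add_C, RingHom.map_det]
  have hfac := congrArg (Matrix.map · (aeval fun v => X v + C (c v)))
    (Matrix.det_smul_eq_mul_adjugate_mul_of_rank_map_eq
      (fun h => hδ (by rw [h, map_zero, map_zero])) hN)
  simp only [Matrix.map_mul] at hfac
  obtain ⟨U, hU⟩ := Matrix.exists_sub_mul_mem_pow_idealOfVars
    (N := N.map (aeval fun v => X v + C (c v))) hδ (by rw [← hfac]; ext; simp) k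
  exact ⟨U, _, hU⟩

section Blocks

open Finsupp

variable {F : Type*} [Field F] {ι κ : Type*} [Fintype ι] [DecidableEq ι]

/- The variable `x_{i,j}` gets weight `Pi.single i 1 ∈ ℕ^ι`, so a monomial has weight
`blockIndicator S` exactly when it has degree one in each block of `S` and zero elsewhere. -/
def blockWeight (v : ι × κ) : ι → ℕ := Pi.single v.1 1

def blockIndicator (S : Finset ι) : ι → ℕ := fun i => if i ∈ S then 1 else 0

theorem blockIndicator_univ : blockIndicator (Finset.univ : Finset ι) = 1 := by
  ext i; simp [blockIndicator]

theorem blockIndicator_eq_and_compl_iff {S : Finset ι} {a b : ι → ℕ} :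
    (a = blockIndicator S ∧ b = blockIndicator Sᶜ) ↔
      (S = Finset.univ.filter (a · ≠ 0) ∧ a + b = 1) := by
  constructor
  · rintro ⟨rfl, rfl⟩
    constructor <;> ext i <;> by_cases hi : i ∈ S <;> simp [blockIndicator, hi]
  · rintro ⟨rfl, hab⟩
    constructor <;> ext i <;> have := congrFun hab i <;> simp [blockIndicator] at this ⊢ <;>
      split_ifs at * <;> omega

instance : NonTorsionWeight ℕ (blockWeight : ι × κ → ι → ℕ) :=
  nonTorsionWeight_of ℕ _ fun v => by simp [blockWeight]

theorem weight_blockWeight_apply [Fintype κ] (e : ι × κ →₀ ℕ) (i : ι) :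
    weight blockWeight e i = ∑ j, e (i, j) := by
  simp only [weight_eq_sum, Finset.sum_apply, Fintype.sum_prod_type, blockWeight, Pi.smul_apply,
    Pi.single_apply, smul_eq_mul, mul_ite, mul_one, mul_zero]
  rw [Finset.sum_comm]
  simp

theorem degree_eq_sum_weight_blockWeight [Fintype κ] (e : ι × κ →₀ ℕ) :
    degree e = ∑ i, weight blockWeight e i := by
  simp only [degree_eq_sum, Fintype.sum_prod_type, weight_blockWeight_apply]

variable (F) in
noncomputable def blockPart (S : Finset ι) :
    MvPolynomial (ι × κ) F →ₗ[F] MvPolynomial (ι × κ) F :=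
  weightedHomogeneousComponent blockWeight (blockIndicator S)

theorem coeff_blockPart (S : Finset ι) (f : MvPolynomial (ι × κ) F) (e : ι × κ →₀ ℕ) :
    coeff e (blockPart F S f) =
      if weight blockWeight e = blockIndicator S then coeff e f else 0 :=
  coeff_weightedHomogeneousComponent ..

theorem blockPart_univ_mul (f g : MvPolynomial (ι × κ) F) :
    blockPart F Finset.univ (f * g) = ∑ S, blockPart F S f * blockPart F Sᶜ g := by
  classical
  ext e
  simp only [coeff_sum, coeff_mul, coeff_blockPart, ite_zero_mul_ite_zero,
    blockIndicator_eq_and_compl_iff, ite_and]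
  rw [Finset.sum_comm]
  simp only [Finset.sum_ite_eq', Finset.mem_univ, if_true, blockIndicator_univ]
  rw [Finset.ite_sum_zero]
  refine Finset.sum_congr rfl fun x hx => ?_
  rw [← map_add, Finset.HasAntidiagonal.mem_antidiagonal.mp hx]

theorem blockPart_univ_eq_of_sub_mem_pow [Fintype κ] {f g : MvPolynomial (ι × κ) F}
    (h : f - g ∈ idealOfVars (ι × κ) F ^ (Fintype.card ι + 1)) :
    blockPart F Finset.univ f = blockPart F Finset.univ g := by
  rw [← sub_eq_zero, ← map_sub]
  ext e
  rw [coeff_blockPart, blockIndicator_univ, coeff_zero]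
  split_ifs with he
  · refine (mem_pow_idealOfVars_iff' _ _).mp h e ?_
    simp [degree_eq_sum_weight_blockWeight, he]
  · rfl

end Blocks

theorem isMultilinearOn_iff {F : Type*} [Field F] {d n : ℕ} {S : Finset (Fin d)}
    {f : MvPolynomial (Fin d × Fin n) F} :
    IsMultilinearOn S f ↔ IsWeightedHomogeneous blockWeight f (blockIndicator S) := by
  simp only [IsMultilinearOn, IsWeightedHomogeneous, mem_support_iff, funext_iff,
    weight_blockWeight_apply, blockIndicator]

theorem hasPRDecomp_of_eq_blockPart_mul {F : Type*} [Field F] {d n a b r : ℕ}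
    {M : Matrix (Fin a) (Fin b) (MvPolynomial (Fin d × Fin n) F)}
    (U : Matrix (Fin a) (Fin r) (MvPolynomial (Fin d × Fin n) F))
    (V : Matrix (Fin r) (Fin b) (MvPolynomial (Fin d × Fin n) F))
    (h : ∀ i j, M i j = blockPart F Finset.univ ((U * V) i j)) :
    HasPRDecomp M (2 ^ d * r) := by
  have hcard : Fintype.card (Finset (Fin d) × Fin r) = 2 ^ d * r := by
    simp [Fintype.card_finset]
  let e := (Fintype.equivFinOfCardEq hcard).symm
  refine ⟨fun t => (e t).1, fun t i => blockPart F (e t).1 (U i (e t).2),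
    fun t j => blockPart F (e t).1ᶜ (V (e t).2 j),
    fun t i => isMultilinearOn_iff.mpr (weightedHomogeneousComponent_isWeightedHomogeneous ..),
    fun t j => isMultilinearOn_iff.mpr (weightedHomogeneousComponent_isWeightedHomogeneous ..),
    Matrix.ext fun i j => ?_⟩
  rw [h, Matrix.sum_apply, Matrix.mul_apply, map_sum]
  simp only [blockPart_univ_mul, Matrix.of_apply]
  rw [e.sum_comp (fun y => blockPart F y.1 (U i y.2) * blockPart F y.1ᶜ (V y.2 j)),
    Fintype.sum_prod_type, Finset.sum_comm]

theorem exists_rank_evalMat_eq_maxR {F : Type*} [Field F] {d n : ℕ} {α β : Type*} [Fintype β]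
    (M : Matrix α β (MvPolynomial (Fin d × Fin n) F)) :
    ∃ p, (evalMat M p).rank = MaxR M :=
  Nat.sSup_mem (Set.range_nonempty _)
    ⟨Fintype.card β, by rintro _ ⟨p, rfl⟩; exact Matrix.rank_le_card_width _⟩

theorem statement_14_general (F : Type*) [Field F] (d n a b : ℕ) (r : ℕ)
    (M : Matrix (Fin a) (Fin b) (MvPolynomial (Fin d × Fin n) F))
    (hM : ∀ i j, IsMultilinear (M i j))
    (hcr : CR M = r) (hmax : MaxR M = r) :
    PR M ≤ 2 ^ d * r := by
  obtain ⟨p, hp⟩ := exists_rank_evalMat_eq_maxR M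
  obtain ⟨ρ, κ, hA⟩ := Matrix.exists_isUnit_det_submatrix_of_rank_eq (hp.trans hmax)
  obtain ⟨U, V, hUV⟩ := exists_aeval_X_add_C_sub_mul_mem_pow_idealOfVars hcr
    (c := fun v => p v.1 v.2) (ρ := ρ) (κ := κ) hA.ne_zero (d + 1)
  refine Nat.sInf_le (hasPRDecomp_of_eq_blockPart_mul U V fun i j => ?_)
  rw [← weightedHomogeneousComponent_aeval_X_add_C (isMultilinearOn_iff.mp (hM i j))
    fun v => p v.1 v.2]
  exact blockPart_univ_eq_of_sub_mem_pow (by simpa using hUV i j)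

/-- If `CR(M) = MaxR(M) = r`, then `PR(M) ≤ 2^d · r`. -/
theorem statement_14 (F : Type*) [Field F] (d n a b : ℕ) (hn : 1 ≤ n) (r : ℕ)
    (M : Matrix (Fin a) (Fin b) (MvPolynomial (Fin d × Fin n) F))
    (hM : ∀ i j, IsMultilinear (M i j))
    (hcr : CR M = r) (hmax : MaxR M = r) :
    PR M ≤ 2 ^ d * r :=
  statement_14_general F d n a b r M hM hcr hmax
end

section
/- Let F be a field and let M be a matrix of homogeneous linear forms in x_1,…,x_n over F with block decomposition M = [[x_1·I_r + A, B], [C, D]], where I_r is the r×r identity matrix and all entries of A, B, C, D are linear forms in x_2,…,x_n only (not involving x_1). Then CR(M) ≥ r + CR(D). -/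
open MvPolynomial

/-!
Let `k = CR D` and pick a nonsingular `k × k` minor of `D`. Bordering it by the first `r` rows
and columns of `M` gives an `(r + k) × (r + k)` minor of `M`; regarded as a polynomial in `x₁`
over `F[x₂, …, xₙ]`, its determinant is nonzero because after multiplication by `x₁ ^ k` its
coefficient of `x₁ ^ (r + k)` is the determinant of the chosen minor of `D`.
-/

namespace Matrix

theorem fromBlocks_submatrix_sum_map {α l m n o l' m' n' o' : Type*}
    (A : Matrix n l α) (B : Matrix n m α) (C : Matrix o l α) (D : Matrix o m α)
    (fn : n' → n) (fo : o' → o) (gl : l' → l) (gm : m' → m) :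
    (fromBlocks A B C D).submatrix (Sum.map fn fo) (Sum.map gl gm) =
      fromBlocks (A.submatrix fn gl) (B.submatrix fn gm) (C.submatrix fo gl)
        (D.submatrix fo gm) := by
  ext (i | i) (j | j) <;> rfl

variable {K : Type*} [Field K] {m n : Type*} [Fintype m] [Fintype n]

theorem exists_linearIndependent_rows (A : Matrix m n K) :
    ∃ r : Fin A.rank → m, LinearIndependent K (A.submatrix r id).row := by
  obtain ⟨κ, a, ha, hspan, hli⟩ := exists_linearIndependent' K A.row
  have : Fintype κ := Fintype.ofInjective a ha
  have hcard : Fintype.card κ = A.rank := by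
    rw [rank_eq_finrank_span_row, ← hspan, finrank_span_eq_card hli]
  let e : Fin A.rank ≃ κ := (Fintype.equivFinOfCardEq hcard).symm
  exact ⟨a ∘ e, hli.comp e e.injective⟩

theorem exists_submatrix_det_ne_zero (A : Matrix m n K) :
    ∃ (r : Fin A.rank → m) (c : Fin A.rank → n), (A.submatrix r c).det ≠ 0 := by
  obtain ⟨r, hr⟩ := A.exists_linearIndependent_rows
  have hrank : (A.submatrix r id)ᵀ.rank = A.rank := by
    rw [rank_transpose, hr.rank_matrix, Fintype.card_fin]
  obtain ⟨c, hc⟩ := (A.submatrix r id)ᵀ.exists_linearIndependent_rows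
  refine ⟨r, c ∘ Fin.cast hrank.symm, fun h => ?_⟩
  have hunit : IsUnit (A.submatrix r (c ∘ Fin.cast hrank.symm))ᵀ :=
    linearIndependent_rows_iff_isUnit.mp (hc.comp _ (Fin.cast_injective _))
  rw [isUnit_iff_isUnit_det, det_transpose, h] at hunit
  exact not_isUnit_zero hunit

end Matrix

namespace Polynomial

open Matrix

variable {R : Type*} [CommRing R] {l o : Type*} [Fintype l] [Fintype o] [DecidableEq l]
  [DecidableEq o]

theorem det_fromBlocks_X_smul_one_add_ne_zero (A : Matrix l l R) (B : Matrix l o R)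
    (C' : Matrix o l R) (D : Matrix o o R) (hD : D.det ≠ 0) :
    (fromBlocks ((X : R[X]) • 1 + A.map C) (B.map C) (C'.map C) (D.map C)).det ≠ 0 := by
  have hscale : diagonal (Sum.elim 1 fun _ => X) *
      fromBlocks ((X : R[X]) • 1 + A.map C) (B.map C) (C'.map C) (D.map C) =
      (X : R[X]) • (fromBlocks 1 0 C' D).map C + (fromBlocks A B 0 0).map C := by
    ext (i | i) (j | j) <;> simp [diagonal_mul, one_apply]
  intro h
  have hcoeff := coeff_det_X_add_C_card (fromBlocks 1 0 C' D) (fromBlocks A B 0 0)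
  rw [← hscale, det_mul, h, mul_zero, coeff_zero, det_fromBlocks_zero₁₂, det_one, one_mul] at hcoeff
  exact hD hcoeff.symm

end Polynomial

namespace MvPolynomial

open Matrix

variable {R : Type*} [CommRing R] {n : ℕ}

theorem finSuccEquiv_eq_C_coeff_zero {p : MvPolynomial (Fin (n + 1)) R}
    (hp : ∀ m ∈ p.support, m 0 = 0) :
    finSuccEquiv R n p = Polynomial.C ((finSuccEquiv R n p).coeff 0) := by
  refine Polynomial.eq_C_of_natDegree_eq_zero ?_
  rw [natDegree_finSuccEquiv, degreeOf_eq_sup]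
  exact le_antisymm (Finset.sup_le fun m hm => (hp m hm).le) (Nat.zero_le _)

theorem exists_map_finSuccEquiv_eq_map_C {α β : Type*}
    {M : Matrix α β (MvPolynomial (Fin (n + 1)) R)} (hM : ∀ i j, ∀ m ∈ (M i j).support, m 0 = 0) :
    ∃ M₀ : Matrix α β (MvPolynomial (Fin n) R), M.map (finSuccEquiv R n) = M₀.map Polynomial.C :=
  ⟨M.map fun p => (finSuccEquiv R n p).coeff 0,
    Matrix.ext fun i j => finSuccEquiv_eq_C_coeff_zero (hM i j)⟩

variable {l o : Type*} [Fintype l] [Fintype o] [DecidableEq l] [DecidableEq o]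

theorem det_fromBlocks_X_zero_smul_one_add_ne_zero
    (A : Matrix l l (MvPolynomial (Fin (n + 1)) R)) (B : Matrix l o (MvPolynomial (Fin (n + 1)) R))
    (C' : Matrix o l (MvPolynomial (Fin (n + 1)) R))
    (D : Matrix o o (MvPolynomial (Fin (n + 1)) R))
    (hA : ∀ i j, ∀ m ∈ (A i j).support, m 0 = 0) (hB : ∀ i j, ∀ m ∈ (B i j).support, m 0 = 0)
    (hC : ∀ i j, ∀ m ∈ (C' i j).support, m 0 = 0) (hD : ∀ i j, ∀ m ∈ (D i j).support, m 0 = 0)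
    (hdet : D.det ≠ 0) :
    (fromBlocks ((X 0 : MvPolynomial (Fin (n + 1)) R) • 1 + A) B C' D).det ≠ 0 := by
  obtain ⟨A₀, hA₀⟩ := exists_map_finSuccEquiv_eq_map_C hA
  obtain ⟨B₀, hB₀⟩ := exists_map_finSuccEquiv_eq_map_C hB
  obtain ⟨C₀, hC₀⟩ := exists_map_finSuccEquiv_eq_map_C hC
  obtain ⟨D₀, hD₀⟩ := exists_map_finSuccEquiv_eq_map_C hD
  have hdet₀ : D₀.det ≠ 0 := by
    intro h
    apply hdet ((finSuccEquiv R n).injective _)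
    rw [AlgEquiv.map_det, AlgEquiv.mapMatrix_apply, hD₀, ← RingHom.mapMatrix_apply,
      ← RingHom.map_det, h, map_zero, map_zero]
  have hmap : (fromBlocks ((X 0 : MvPolynomial (Fin (n + 1)) R) • 1 + A) B C' D).map
      (finSuccEquiv R n) =
      fromBlocks ((Polynomial.X : Polynomial (MvPolynomial (Fin n) R)) • 1 + A₀.map Polynomial.C)
        (B₀.map Polynomial.C) (C₀.map Polynomial.C) (D₀.map Polynomial.C) := by
    rw [fromBlocks_map, Matrix.map_add _ (map_add _), hA₀, hB₀, hC₀, hD₀]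
    congr 2
    ext i j : 1
    by_cases h : i = j <;> simp [one_apply, h, finSuccEquiv_X_zero]
  intro h
  apply Polynomial.det_fromBlocks_X_smul_one_add_ne_zero A₀ B₀ C₀ D₀ hdet₀
  rw [← hmap, ← AlgEquiv.mapMatrix_apply, ← AlgEquiv.map_det, h, map_zero]

end MvPolynomial

section CommutativeRank

open Matrix

variable {F : Type*} [Field F] {σ α β : Type*} [Fintype β]

theorem card_le_CR_of_det_submatrix_ne_zero {ι : Type*} [Fintype ι] [DecidableEq ι]
    (M : Matrix α β (MvPolynomial σ F)) (f : ι → α) (g : ι → β)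
    (h : (M.submatrix f g).det ≠ 0) : Fintype.card ι ≤ CR M := by
  let φ := algebraMap (MvPolynomial σ F) (FractionRing (MvPolynomial σ F))
  have hdet : ((M.submatrix f g).map φ).det ≠ 0 := by
    rw [← RingHom.mapMatrix_apply, ← RingHom.map_det]
    exact (map_ne_zero_iff _ (IsFractionRing.injective _ _)).mpr h
  calc Fintype.card ι = ((M.submatrix f g).map φ).rank := (rank_of_det_ne_zero hdet).symm
    _ ≤ CR M := rank_submatrix_le (M.map φ) f g

theorem exists_det_submatrix_ne_zero_of_CR [Fintype α] (M : Matrix α β (MvPolynomial σ F)) :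
    ∃ (f : Fin (CR M) → α) (g : Fin (CR M) → β), (M.submatrix f g).det ≠ 0 := by
  obtain ⟨f, g, h⟩ :=
    (M.map (algebraMap _ (FractionRing (MvPolynomial σ F)))).exists_submatrix_det_ne_zero
  refine ⟨f, g, fun h0 => h ?_⟩
  rw [submatrix_map, ← RingHom.mapMatrix_apply, ← RingHom.map_det]
  exact (congrArg _ h0).trans (map_zero _)

end CommutativeRank

/-- If `M = [[x₁·I_r + A, B], [C', D]]` where all entries of
`A, B, C', D` are linear forms not involving `x₁` (variable `0`), then
`CR(M) ≥ r + CR(D)`. -/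
theorem statement_15 (F : Type*) [Field F] (n r s t : ℕ)
    (A : Matrix (Fin r) (Fin r) (MvPolynomial (Fin (n + 1)) F))
    (B : Matrix (Fin r) (Fin t) (MvPolynomial (Fin (n + 1)) F))
    (C' : Matrix (Fin s) (Fin r) (MvPolynomial (Fin (n + 1)) F))
    (D : Matrix (Fin s) (Fin t) (MvPolynomial (Fin (n + 1)) F))
    (hA : ∀ i j, (A i j).IsHomogeneous 1 ∧ ∀ m ∈ (A i j).support, m 0 = 0)
    (hB : ∀ i j, (B i j).IsHomogeneous 1 ∧ ∀ m ∈ (B i j).support, m 0 = 0)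
    (hC : ∀ i j, (C' i j).IsHomogeneous 1 ∧ ∀ m ∈ (C' i j).support, m 0 = 0)
    (hD : ∀ i j, (D i j).IsHomogeneous 1 ∧ ∀ m ∈ (D i j).support, m 0 = 0) :
    r + CR D ≤ CR (Matrix.fromBlocks
      ((MvPolynomial.X 0 : MvPolynomial (Fin (n + 1)) F) •
        (1 : Matrix (Fin r) (Fin r) (MvPolynomial (Fin (n + 1)) F)) + A) B C' D) := by
  obtain ⟨f, g, hfg⟩ := exists_det_submatrix_ne_zero_of_CR D
  have hminor := MvPolynomial.det_fromBlocks_X_zero_smul_one_add_ne_zero A (B.submatrix id g)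
    (C'.submatrix f id) (D.submatrix f g) (fun i j => (hA i j).2) (fun i j => (hB i (g j)).2)
    (fun i j => (hC (f i) j).2) (fun i j => (hD (f i) (g j)).2) hfg
  calc r + CR D = Fintype.card (Fin r ⊕ Fin (CR D)) := by simp
    _ ≤ _ := card_le_CR_of_det_submatrix_ne_zero _ (Sum.map id f) (Sum.map id g)
      (by rwa [Matrix.fromBlocks_submatrix_sum_map, Matrix.submatrix_id_id])
end

section
/- Let F be a field and M an a×b M_1-matrix. Then PR(M) ≤ r if and only if there exist invertible scalar matrices P ∈ GL_a(F) and Q ∈ GL_b(F) and nonnegative integers r_1, r_2 with r_1 + r_2 ≤ r such that the (i,j) entry of PMQ is zero whenever i > r_1 and j > r_2 (i.e., PMQ has block form [[M_{11}, M_{12}], [M_{21}, 0]] with M_{11} of size r_1 × r_2). -/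
open MvPolynomial

/-! A partition-rank decomposition of length `r` is the same thing as a factorization
`M = U L + L' V` with `U : a × r₁` and `V : r₂ × b` scalar, `L`, `L'` linear, and
`r₁ + r₂ = r`. Given such a factorization, pick an invertible `P` whose last `a - r₁` rows
annihilate the columns of `U`, and an invertible `Q` whose last `b - r₂` columns are killed
by the rows of `V`; then `PMQ` vanishes in the bottom-right block. Conversely, if `N = PMQ`
vanishes there, `N` is the sum of its first `r₁` rows (each `eᵢ ⊗ row`) and of what remains
of its first `r₂` columns (each `column ⊗ eⱼ`), and conjugating back by `P⁻¹`, `Q⁻¹`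
preserves this shape. -/

section

open Matrix

variable {F : Type*} [Field F]

theorem Submodule.exists_basis_mem_of_le_finrank {V : Type*} [AddCommGroup V] [Module F V]
    [FiniteDimensional F V] (W : Submodule F V) {a r : ℕ}
    (ha : Module.finrank F V = a) (hW : a - r ≤ Module.finrank F W) :
    ∃ b : Module.Basis (Fin a) F V, ∀ i : Fin a, r ≤ i → b i ∈ W := by
  obtain ⟨W', hW'⟩ := W.exists_isCompl
  have hdim : Module.finrank F W' + Module.finrank F W = a :=
    ha ▸ Submodule.finrank_add_eq_of_isCompl hW'.symm
  let e := finSumFinEquiv.trans (finCongr hdim)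
  refine ⟨(((Module.finBasis F W').prod (Module.finBasis F W)).map
    (W'.prodEquivOfIsCompl W hW'.symm)).reindex e, fun i hi => ?_⟩
  -- The basis of `W'` takes the indices below `finrank W' = a - finrank W ≤ r`.
  rcases hk : e.symm i with k | k
  · have : (i : ℕ) = k := by simp [e, (e.symm_apply_eq).mp hk]
    omega
  · simp [hk]

namespace Matrix

variable {ι κ : Type*} [Fintype ι] [Fintype κ] {a b : ℕ}

theorem exists_isUnit_mul_row_eq_zero (U : Matrix (Fin a) ι F) :
    ∃ P : Matrix (Fin a) (Fin a) F, IsUnit P ∧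
      ∀ i : Fin a, Fintype.card ι ≤ i → (P * U) i = 0 := by
  have hker : a - Fintype.card ι ≤ Module.finrank F (LinearMap.ker U.vecMulLinear) := by
    have hrange := (LinearMap.range U.vecMulLinear).finrank_le
    have := U.vecMulLinear.finrank_range_add_finrank_ker
    simp only [Module.finrank_fintype_fun_eq_card, Fintype.card_fin] at hrange this
    omega
  obtain ⟨B, hB⟩ := (LinearMap.ker U.vecMulLinear).exists_basis_mem_of_le_finrank
    (Module.finrank_fin_fun F) hker
  exact ⟨Matrix.of B, linearIndependent_rows_iff_isUnit.mp B.linearIndependent,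
    fun i hi => hB i hi⟩

theorem exists_isUnit_mul_col_eq_zero (V : Matrix ι (Fin b) F) :
    ∃ Q : Matrix (Fin b) (Fin b) F, IsUnit Q ∧
      ∀ j : Fin b, Fintype.card ι ≤ j → ∀ l, (V * Q) l j = 0 := by
  obtain ⟨P, hP, hPV⟩ := Vᵀ.exists_isUnit_mul_row_eq_zero
  refine ⟨Pᵀ, (isUnit_transpose P).mpr hP, fun j hj l => ?_⟩
  rw [← transpose_transpose V, ← transpose_mul, transpose_apply, hPV j hj, Pi.zero_apply]

theorem exists_zero_block_of_eq_add {R : Type*} [CommRing R] (f : F →+* R)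
    {M : Matrix (Fin a) (Fin b) R} {U : Matrix (Fin a) ι F} {L : Matrix ι (Fin b) R}
    {L' : Matrix (Fin a) κ R} {V : Matrix κ (Fin b) F} (hM : M = U.map f * L + L' * V.map f) :
    ∃ (P : Matrix (Fin a) (Fin a) F) (Q : Matrix (Fin b) (Fin b) F), IsUnit P ∧ IsUnit Q ∧
      ∀ (i : Fin a) (j : Fin b), Fintype.card ι ≤ i → Fintype.card κ ≤ j →
        (P.map f * M * Q.map f) i j = 0 := by
  obtain ⟨P, hP, hPU⟩ := U.exists_isUnit_mul_row_eq_zero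
  obtain ⟨Q, hQ, hVQ⟩ := V.exists_isUnit_mul_col_eq_zero
  refine ⟨P, Q, hP, hQ, fun i j hi hj => ?_⟩
  have hPMQ : P.map f * M * Q.map f
      = (P * U).map f * (L * Q.map f) + (P.map f * L') * (V * Q).map f := by
    simp only [hM, Matrix.map_mul, Matrix.mul_add, Matrix.add_mul, Matrix.mul_assoc]
  rw [hPMQ, add_apply, mul_apply, mul_apply]
  simp [hPU i hi, hVQ j hj]

theorem eq_one_submatrix_mul_add_mul_one_submatrix {R α β : Type*} [Semiring R]
    [Fintype α] [Fintype β] [DecidableEq α] [DecidableEq β]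
    (p : α → Prop) (q : β → Prop) [DecidablePred p] [DecidablePred q] (N : Matrix α β R)
    (hN : ∀ i j, ¬ p i → ¬ q j → N i j = 0) :
    N = (1 : Matrix α α R).submatrix id (Subtype.val : Subtype p → α) *
          N.submatrix (Subtype.val : Subtype p → α) id +
        (Matrix.of fun i (k : Subtype q) => if p i then 0 else N i k) *
          (1 : Matrix β β R).submatrix (Subtype.val : Subtype q → β) id := by
  ext i j
  simp only [add_apply, mul_apply, submatrix_apply, of_apply, one_apply, id, ite_mul, one_mul,
    zero_mul, mul_ite, mul_one, mul_zero]
  rw [← Finset.sum_subtype (Finset.univ.filter p) (by simp) fun k => if i = k then N k j else 0,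
    ← Finset.sum_subtype (Finset.univ.filter q) (by simp)
      fun k => if k = j then (if p i then 0 else N i k) else 0]
  simp only [Finset.sum_ite_eq, Finset.sum_ite_eq', Finset.mem_filter, Finset.mem_univ, true_and]
  by_cases hi : p i <;> by_cases hj : q j <;> simp [hi, hj, hN]

theorem isHomogeneous_mul_apply {α β σ R : Type*} [CommSemiring R] {m n : ℕ}
    {A : Matrix α ι (MvPolynomial σ R)} {B : Matrix ι β (MvPolynomial σ R)}
    (hA : ∀ i k, (A i k).IsHomogeneous m) (hB : ∀ k j, (B k j).IsHomogeneous n)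
    (i : α) (j : β) :
    ((A * B) i j).IsHomogeneous (m + n) :=
  IsHomogeneous.sum _ _ _ fun k _ => (hA i k).mul (hB k j)

end Matrix

section PartitionRank

/- `C (σ := Fin n)` pins down the ring before `*` is elaborated; with a bare `C` the product
of rectangular matrices is resolved to the `CStarMatrix` one. -/

variable {ι κ : Type*} [Fintype ι] [Fintype κ] {n a b : ℕ}
  {M : Matrix (Fin a) (Fin b) (MvPolynomial (Fin n) F)}

theorem hasPR1Decomp_of_eq_add {r : ℕ}
    {U : Matrix (Fin a) ι F} {L : Matrix ι (Fin b) (MvPolynomial (Fin n) F)}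
    {L' : Matrix (Fin a) κ (MvPolynomial (Fin n) F)} {V : Matrix κ (Fin b) F}
    (hr : Fintype.card ι + Fintype.card κ = r) (hL : ∀ k j, (L k j).IsHomogeneous 1)
    (hL' : ∀ i k, (L' i k).IsHomogeneous 1)
    (hM : M = U.map (C (σ := Fin n)) * L + L' * V.map (C (σ := Fin n))) :
    HasPR1Decomp M r := by
  obtain ⟨e⟩ : Nonempty (Fin r ≃ ι ⊕ κ) :=
    ⟨(Fintype.equivFinOfCardEq (by rw [Fintype.card_sum, hr])).symm⟩
  let u (s : ι ⊕ κ) (i : Fin a) := Sum.elim (fun k => C (U i k)) (fun k => L' i k) s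
  let v (s : ι ⊕ κ) (j : Fin b) := Sum.elim (fun k => L k j) (fun k => C (V k j)) s
  have hu : ∀ s i, (u s i).IsHomogeneous (if s.isLeft then 0 else 1) := by
    rintro (k | k) i
    · exact isHomogeneous_C _ _
    · exact hL' i k
  have hv : ∀ s j, (v s j).IsHomogeneous (if s.isLeft then 1 else 0) := by
    rintro (k | k) j
    · exact hL k j
    · exact isHomogeneous_C _ _
  refine ⟨fun t => (e t).isLeft, fun t => u (e t), fun t => v (e t),
    fun t => hu (e t), fun t => hv (e t), ?_⟩
  rw [e.sum_comp (fun s => Matrix.of fun i j => u s i * v s j), Fintype.sum_sum_type, hM]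
  refine Matrix.ext fun i j => ?_
  simp [u, v, Matrix.mul_apply, Matrix.sum_apply]

theorem HasPR1Decomp.exists_eq_add {r : ℕ} (h : HasPR1Decomp M r) :
    ∃ (ι κ : Type) (_ : Fintype ι) (_ : Fintype κ) (U : Matrix (Fin a) ι F)
      (L : Matrix ι (Fin b) (MvPolynomial (Fin n) F))
      (L' : Matrix (Fin a) κ (MvPolynomial (Fin n) F)) (V : Matrix κ (Fin b) F),
      Fintype.card ι + Fintype.card κ = r ∧ (∀ k j, (L k j).IsHomogeneous 1) ∧
        (∀ i k, (L' i k).IsHomogeneous 1) ∧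
        M = U.map (C (σ := Fin n)) * L + L' * V.map (C (σ := Fin n)) := by
  obtain ⟨c, u, v, hu, hv, rfl⟩ := h
  have hconst : ∀ {p : MvPolynomial (Fin n) F}, p.IsHomogeneous 0 → C (coeff 0 p) = p :=
    fun hp => (totalDegree_eq_zero_iff_eq_C.mp (Nat.le_zero.mp hp.totalDegree_le)).symm
  refine ⟨{t // c t = true}, {t // ¬ c t = true}, inferInstance, inferInstance,
    Matrix.of fun i t => coeff 0 (u t i), Matrix.of fun t j => v t j,
    Matrix.of fun i t => u t i, Matrix.of fun t j => coeff 0 (v t j), ?_, ?_, ?_, ?_⟩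
  · have := Fintype.card_subtype_le fun t => c t = true
    rw [Fintype.card_subtype_compl, Fintype.card_fin] at *
    omega
  · rintro ⟨t, ht⟩ j
    simpa [ht] using hv t j
  · rintro i ⟨t, ht⟩
    simpa [ht] using hu t i
  · refine Matrix.ext fun i j => ?_
    rw [Matrix.sum_apply, ← Fintype.sum_subtype_add_sum_subtype (fun t => c t = true),
      Matrix.add_apply, Matrix.mul_apply, Matrix.mul_apply]
    congr 1 <;> refine Finset.sum_congr rfl fun ⟨t, ht⟩ _ => ?_
    · simp [hconst (by simpa [ht] using hu t i)]
    · simp [hconst (by simpa [ht] using hv t j)]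

theorem hasPR1Decomp_PR1 (hM : ∀ i j, (M i j).IsHomogeneous 1) : HasPR1Decomp M (PR1 M) :=
  Nat.sInf_mem (s := {r | HasPR1Decomp M r}) ⟨a, hasPR1Decomp_of_eq_add (ι := Fin a)
    (κ := Fin 0) (U := 1) (L := M) (L' := 0) (V := 0) (by simp) hM (fun _ k => k.elim0)
    (by simp [Matrix.map_one _ (map_zero C) (map_one C)])⟩

theorem PR1_map_C_mul_mul_map_C_le (hM : ∀ i j, (M i j).IsHomogeneous 1)
    (A : Matrix (Fin a) (Fin a) F) (B : Matrix (Fin b) (Fin b) F) :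
    PR1 (A.map (C (σ := Fin n)) * M * B.map (C (σ := Fin n))) ≤ PR1 M := by
  obtain ⟨ι, κ, _, _, U, L, L', V, hr, hL, hL', hUL⟩ := (hasPR1Decomp_PR1 hM).exists_eq_add
  refine Nat.sInf_le (hasPR1Decomp_of_eq_add (U := A * U) (L := L * B.map C)
    (L' := A.map C * L') (V := V * B) hr
    (isHomogeneous_mul_apply hL fun _ _ => isHomogeneous_C _ _)
    (isHomogeneous_mul_apply (fun _ _ => isHomogeneous_C _ _) hL') ?_)
  simp only [hUL, Matrix.map_mul, Matrix.mul_add, Matrix.add_mul, Matrix.mul_assoc]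

theorem PR1_le_add_of_zero_block {r₁ r₂ : ℕ} (hM : ∀ i j, (M i j).IsHomogeneous 1)
    (hzero : ∀ (i : Fin a) (j : Fin b), r₁ ≤ i → r₂ ≤ j → M i j = 0) :
    PR1 M ≤ r₁ + r₂ := by
  have hblock := eq_one_submatrix_mul_add_mul_one_submatrix (fun i : Fin a => (i : ℕ) < r₁)
    (fun j : Fin b => (j : ℕ) < r₂) M fun i j hi hj => hzero i j (not_lt.mp hi) (not_lt.mp hj)
  have hone (m : ℕ) : (1 : Matrix (Fin m) (Fin m) F).map (C (σ := Fin n)) = 1 :=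
    Matrix.map_one _ (map_zero C) (map_one C)
  have hcard (m N : ℕ) : Fintype.card {i : Fin m // (i : ℕ) < N} ≤ N := by
    rw [Fintype.card_subtype, Fin.card_filter_val_lt]
    exact min_le_right _ _
  refine (Nat.sInf_le (hasPR1Decomp_of_eq_add (M := M) (ι := {i : Fin a // (i : ℕ) < r₁})
    (κ := {j : Fin b // (j : ℕ) < r₂})
    (U := (1 : Matrix (Fin a) (Fin a) F).submatrix id Subtype.val)
    (L := M.submatrix Subtype.val id)
    (L' := Matrix.of fun i k => if (i : ℕ) < r₁ then 0 else M i k.1)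
    (V := (1 : Matrix (Fin b) (Fin b) F).submatrix Subtype.val id) rfl
    (fun k j => hM _ _) (fun i k => ?_) ?_)).trans (add_le_add (hcard a r₁) (hcard b r₂))
  · dsimp only [Matrix.of_apply]
    split_ifs
    exacts [isHomogeneous_zero _ _ _, hM _ _]
  · rwa [← submatrix_map, ← submatrix_map, hone, hone]

end PartitionRank

end

theorem statement_16_general (F : Type*) [Field F] (n a b : ℕ) (r : ℕ)
    (M : Matrix (Fin a) (Fin b) (MvPolynomial (Fin n) F))
    (hM : ∀ i j, (M i j).IsHomogeneous 1) :
    PR1 M ≤ r ↔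
      ∃ (P : Matrix (Fin a) (Fin a) F) (Q : Matrix (Fin b) (Fin b) F) (r₁ r₂ : ℕ),
        IsUnit P ∧ IsUnit Q ∧ r₁ + r₂ ≤ r ∧
        ∀ (i : Fin a) (j : Fin b), r₁ ≤ (i : ℕ) → r₂ ≤ (j : ℕ) →
          (P.map (fun c => (MvPolynomial.C c : MvPolynomial (Fin n) F)) * M *
            Q.map (fun c => (MvPolynomial.C c : MvPolynomial (Fin n) F))) i j = 0 := by
  constructor
  · intro hr
    obtain ⟨ι, κ, _, _, U, L, L', V, hcard, -, -, hUL⟩ := (hasPR1Decomp_PR1 hM).exists_eq_add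
    obtain ⟨P, Q, hP, hQ, hzero⟩ := Matrix.exists_zero_block_of_eq_add C hUL
    exact ⟨P, Q, _, _, hP, hQ, hcard ▸ hr, hzero⟩
  · rintro ⟨P, Q, r₁, r₂, hP, hQ, hr, hzero⟩
    obtain ⟨P', hP'⟩ := hP.exists_left_inv
    obtain ⟨Q', hQ'⟩ := hQ.exists_right_inv
    have hC {m : ℕ} (A : Matrix (Fin m) (Fin m) F) (i k) : (A.map C i k).IsHomogeneous 0 :=
      isHomogeneous_C (Fin n) (A i k)
    have hPMQ (i j) :
        ((P.map (C (σ := Fin n)) * M * Q.map (C (σ := Fin n))) i j).IsHomogeneous 1 :=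
      Matrix.isHomogeneous_mul_apply (Matrix.isHomogeneous_mul_apply (hC P) hM) (hC Q) i j
    calc PR1 M = PR1 (P'.map (C (σ := Fin n)) * (P.map C * M * Q.map C) * Q'.map C) := by
          rw [← Matrix.mul_assoc, ← Matrix.mul_assoc, ← Matrix.map_mul, hP', Matrix.mul_assoc,
            ← Matrix.map_mul, hQ', Matrix.map_one _ (map_zero C) (map_one C),
            Matrix.map_one _ (map_zero C) (map_one C), Matrix.one_mul, Matrix.mul_one]
      _ ≤ PR1 (P.map (C (σ := Fin n)) * M * Q.map C) := PR1_map_C_mul_mul_map_C_le hPMQ P' Q'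
      _ ≤ r₁ + r₂ := PR1_le_add_of_zero_block hPMQ hzero
      _ ≤ r := hr

/-- For a matrix `M` of linear forms, `PR(M) ≤ r` iff there are
invertible scalar matrices `P, Q` and `r₁ + r₂ ≤ r` such that `PMQ` vanishes in
its bottom-right `(a − r₁) × (b − r₂)` block. -/
theorem statement_16 (F : Type*) [Field F] (n a b : ℕ) (hn : 1 ≤ n) (r : ℕ)
    (M : Matrix (Fin a) (Fin b) (MvPolynomial (Fin n) F))
    (hM : ∀ i j, (M i j).IsHomogeneous 1) :
    PR1 M ≤ r ↔
      ∃ (P : Matrix (Fin a) (Fin a) F) (Q : Matrix (Fin b) (Fin b) F) (r₁ r₂ : ℕ),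
        IsUnit P ∧ IsUnit Q ∧ r₁ + r₂ ≤ r ∧
        ∀ (i : Fin a) (j : Fin b), r₁ ≤ (i : ℕ) → r₂ ≤ (j : ℕ) →
          (P.map (fun c => (MvPolynomial.C c : MvPolynomial (Fin n) F)) * M *
            Q.map (fun c => (MvPolynomial.C c : MvPolynomial (Fin n) F))) i j = 0 :=
  statement_16_general F n a b r M hM
end

section
/- (Flanders) Let F be a field and M an a×b M_1-matrix with max-rank MaxR(M) = r, and suppose |F| > r. Then there exist invertible scalar matrices P ∈ GL_a(F) and Q ∈ GL_b(F) such that the (i,j) entry of PMQ is zero whenever i > r and j > r (i.e., PMQ has block form [[M_{11}, M_{12}], [M_{21}, 0]] with M_{11} of size r × r). -/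
open MvPolynomial

/-!
Evaluate `M` at a point `p₀` where it has its maximal rank `r`, and choose `P`, `Q` with
`P M(p₀) Q = [[1_r, 0], [0, 0]]`; put `N = P M Q`. Fix `i, j ≥ r` and a point `p`, and take the
`(r + 1)`-minor of `N` on the rows `0, …, r - 1, i` and the columns `0, …, r - 1, j` along the
line `p₀ + t p`: a polynomial in `t` of degree at most `r + 1`. Since every evaluation of `N` has
rank at most `r`, it vanishes at every `t`, and so does its top coefficient, a minor of `N(p)`.
Having degree at most `r` and more than `r` roots, it is zero. Its linear coefficient is
`N(p)_{ij}`, so the linear form `N_{ij}` vanishes everywhere, and therefore is zero.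
-/

namespace MvPolynomial

variable {σ R : Type*} [CommRing R]

theorem IsHomogeneous.eval_add_smul {f : MvPolynomial σ R} (hf : f.IsHomogeneous 1)
    (x y : σ → R) (t : R) : eval (x + t • y) f = eval x f + t * eval y f := by
  have hspan : f ∈ Submodule.span R (Set.range X) := by
    rw [← homogeneousSubmodule_one_eq_span_X]
    exact hf
  clear hf
  induction hspan using Submodule.span_induction with
  | mem _ h => obtain ⟨i, rfl⟩ := h; simp
  | zero => simp
  | add _ _ _ _ h₁ h₂ => simp only [map_add, h₁, h₂]; ring
  | smul c _ _ h => simp only [smul_eval, h]; ring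

theorem isHomogeneous_map_C_mul_mul_map_C {k l m o : Type*} [Fintype l] [Fintype m] {n : ℕ}
    {M : Matrix l m (MvPolynomial σ R)} (hM : ∀ i j, (M i j).IsHomogeneous n)
    (P : Matrix k l R) (Q : Matrix m o R) (i : k) (j : o) :
    ((P.map (fun c => (C c : MvPolynomial σ R)) * M * Q.map (fun c => (C c : MvPolynomial σ R)))
      i j).IsHomogeneous n := by
  simp only [Matrix.mul_apply, Matrix.map_apply]
  refine IsHomogeneous.sum _ _ _ fun l _ => ?_
  simpa using (IsHomogeneous.sum _ _ _ fun k _ => by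
    simpa using (isHomogeneous_C σ (P i k)).mul (hM k l)).mul (isHomogeneous_C σ (Q l j))

end MvPolynomial

namespace Matrix

variable {F : Type*} [Field F]

theorem det_submatrix_eq_zero_of_rank_lt {m n κ : Type*} [Fintype n] [Fintype κ] [DecidableEq κ]
    (A : Matrix m n F) (f : κ → m) (g : κ → n) (h : A.rank < Fintype.card κ) :
    (A.submatrix f g).det = 0 := by
  by_contra hdet
  have hunit : IsUnit (A.submatrix f g) := (isUnit_iff_isUnit_det _).mpr (.mk0 _ hdet)
  have hle := A.rank_submatrix_le f g
  rw [rank_of_isUnit _ hunit] at hle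
  omega

def rankNormalForm {R : Type*} [Zero R] [One R] (a b r : ℕ) : Matrix (Fin a) (Fin b) R :=
  of fun i j => if (i : ℕ) = j ∧ (i : ℕ) < r then 1 else 0

theorem rankNormalForm_mul_transpose {R : Type*} [NonAssocSemiring R] (a b r : ℕ) :
    (rankNormalForm a r r : Matrix (Fin a) (Fin r) R) *
      (rankNormalForm b r r : Matrix (Fin b) (Fin r) R)ᵀ = rankNormalForm a b r := by
  ext i j : 1
  rw [mul_apply]
  simp only [rankNormalForm, transpose_apply, of_apply, ite_mul, one_mul, zero_mul]
  by_cases hi : (i : ℕ) < r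
  · rw [Finset.sum_eq_single ⟨i, hi⟩ (fun t _ ht => if_neg fun h => ht (Fin.ext h.1.symm))
      (by simp)]
    by_cases hij : (i : ℕ) = j
    · simp [hi, ← hij]
    · simp [hij, Ne.symm hij]
  · rw [Finset.sum_eq_zero fun (t : Fin r) _ =>
      if_neg fun (h : (i : ℕ) = t ∧ (i : ℕ) < r) => hi h.2, if_neg fun h => hi h.2]

theorem exists_mul_eq_of_rank_eq {a b r : ℕ} (A : Matrix (Fin a) (Fin b) F) (hA : A.rank = r) :
    ∃ (C : Matrix (Fin a) (Fin r) F) (D : Matrix (Fin r) (Fin b) F), C * D = A := by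
  let W := Submodule.span F (Set.range A.col)
  let bW : Module.Basis (Fin r) F W :=
    Module.finBasisOfFinrankEq F W (hA ▸ A.rank_eq_finrank_span_cols).symm
  let col (j : Fin b) : W := ⟨A.col j, Submodule.subset_span ⟨j, rfl⟩⟩
  refine ⟨of fun i t => (bW t : Fin a → F) i, of fun t j => bW.repr (col j) t, ?_⟩
  ext i j : 1
  have hcol := congrArg (fun w : W => (w : Fin a → F) i) (bW.sum_repr (col j))
  simp only [Submodule.coe_sum, Submodule.coe_smul, Finset.sum_apply, Pi.smul_apply,
    smul_eq_mul] at hcol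
  rw [mul_apply]
  simpa [mul_comm, col] using hcol

theorem exists_isUnit_mul_eq_rankNormalForm {a r : ℕ} (C : Matrix (Fin a) (Fin r) F)
    (hC : C.rank = r) :
    ∃ P : Matrix (Fin a) (Fin a) F, IsUnit P ∧ P * C = rankNormalForm a r r := by
  have hindep : LinearIndependent F C.col := by
    rw [linearIndependent_iff_card_eq_finrank_span, Fintype.card_fin]
    exact hC.symm.trans C.rank_eq_finrank_span_cols
  let b := Module.Basis.sumExtend hindep
  have : Finite (Module.Basis.sumExtendIndex hindep) := by
    have := Module.Finite.finite_basis b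
    exact .of_injective _ (Sum.inr_injective (α := Fin r))
  have : Fintype (Module.Basis.sumExtendIndex hindep) := Fintype.ofFinite _
  have hcard : r + Fintype.card (Module.Basis.sumExtendIndex hindep) = a := by
    simpa using (Module.finrank_eq_card_basis b).symm
  let e : Fin r ⊕ Module.Basis.sumExtendIndex hindep ≃ Fin a :=
    (Equiv.sumCongr (.refl _) (Fintype.equivFin _)).trans (finSumFinEquiv.trans (finCongr hcard))
  have hb (t : Fin r) : b (.inl t) = C.col t := by
    simp only [b, Module.Basis.sumExtend, Module.Basis.reindex_apply, Module.Basis.coe_extend]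
    rfl
  have he (t : Fin r) : (e (.inl t) : ℕ) = t := by simp [e]
  let bA := b.reindex e
  have : Invertible (bA.toMatrix (Pi.basisFun F (Fin a))) := bA.invertibleToMatrix _
  refine ⟨bA.toMatrix (Pi.basisFun F (Fin a)), isUnit_of_invertible _, ?_⟩
  have hC : (Pi.basisFun F (Fin a)).toMatrix C.col = C := by
    ext i t : 1
    simp [Module.Basis.toMatrix_apply]
  rw [← hC, Module.Basis.toMatrix_mul_toMatrix]
  ext i t : 1
  rw [Module.Basis.toMatrix_apply, ← hb t, ← e.symm_apply_apply (.inl t), ← b.reindex_apply,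
    bA.repr_self, Finsupp.single_apply]
  simp only [rankNormalForm, of_apply, Fin.ext_iff, he, eq_comm]
  by_cases h : (i : ℕ) = t <;> simp [h]

theorem exists_isUnit_mul_mul_eq_rankNormalForm {a b r : ℕ} (A : Matrix (Fin a) (Fin b) F)
    (hA : A.rank = r) :
    ∃ (P : Matrix (Fin a) (Fin a) F) (Q : Matrix (Fin b) (Fin b) F),
      IsUnit P ∧ IsUnit Q ∧ P * A * Q = rankNormalForm a b r := by
  obtain ⟨C, D, hCD⟩ := exists_mul_eq_of_rank_eq A hA
  have hC : C.rank = r :=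
    le_antisymm C.rank_le_width (hA.symm.trans_le (hCD ▸ C.rank_mul_le_left D))
  have hD : Dᵀ.rank = r := D.rank_transpose.trans
    (le_antisymm D.rank_le_height (hA.symm.trans_le (hCD ▸ C.rank_mul_le_right D)))
  obtain ⟨P, hP, hPC⟩ := exists_isUnit_mul_eq_rankNormalForm C hC
  obtain ⟨Q, hQ, hQD⟩ := exists_isUnit_mul_eq_rankNormalForm Dᵀ hD
  refine ⟨P, Qᵀ, hP, (isUnit_transpose Q).mpr hQ, ?_⟩
  calc P * A * Qᵀ = (P * C) * (Q * Dᵀ)ᵀ := by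
        rw [← hCD, transpose_mul, transpose_transpose]
        simp only [Matrix.mul_assoc]
    _ = rankNormalForm a b r := by rw [hPC, hQD, rankNormalForm_mul_transpose]

section Pencil

open Polynomial

variable {ι : Type*} [Fintype ι] [DecidableEq ι]

theorem corner_eq_zero_of_det_pencil_eq_zero (S : Matrix (ι ⊕ Unit) (ι ⊕ Unit) F)
    (hF : (Fintype.card ι : Cardinal) < Cardinal.mk F)
    (hpencil : ∀ t : F, (fromBlocks 1 0 0 0 + t • S).det = 0) (hS : S.det = 0) :
    S (.inr ()) (.inr ()) = 0 := by
  set E : Matrix (ι ⊕ Unit) (ι ⊕ Unit) F := fromBlocks 1 0 0 0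
  set q : F[X] := det ((Polynomial.X : F[X]) • S.map Polynomial.C + E.map Polynomial.C)
  have hq_eval (t : F) : q.eval t = (E + t • S).det := by
    rw [← coe_evalRingHom, RingHom.map_det]
    congr 1
    ext i j
    simp only [RingHom.mapMatrix_apply, coe_evalRingHom, map_apply, add_apply, smul_apply,
      smul_eq_mul, Polynomial.eval_add, Polynomial.eval_C, Polynomial.eval_mul, Polynomial.eval_X]
    ring
  have hq_natDegree : q.natDegree ≤ Fintype.card ι := by
    have hle := natDegree_det_X_add_C_le S E
    have htop := coeff_det_X_add_C_card S E
    rw [Fintype.card_sum, Fintype.card_unit] at hle htop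
    refine Nat.le_of_lt_succ (hle.lt_of_ne fun h => ?_)
    rw [← h, coeff_natDegree, hS, leadingCoeff_eq_zero] at htop
    simp [htop] at h
  have hq : q = 0 := eq_zero_of_forall_eval_zero_of_natDegree_lt_card q
    (fun t => (hq_eval t).trans (hpencil t)) (lt_of_le_of_lt (by exact_mod_cast hq_natDegree) hF)
  -- the last row of `E` vanishes, so `X` divides the last row of the pencil
  set S' := S.updateRow (.inr ()) 0
  set E' := E.updateRow (.inr ()) (S (.inr ()))
  set R : Matrix (ι ⊕ Unit) (ι ⊕ Unit) F[X] :=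
    (Polynomial.X : F[X]) • S'.map Polynomial.C + E'.map Polynomial.C
  have hfactor : q = Polynomial.X * R.det := by
    rw [← updateRow_eq_self R (.inr ()), ← det_updateRow_smul]
    show det _ = det _
    congr 1
    ext (i | ⟨⟩) (j | ⟨⟩) <;> simp [R, S', E', E]
  have hE' : E'.det = S (.inr ()) (.inr ()) := by
    have hblocks : E' = fromBlocks 1 0 S.toBlocks₂₁ S.toBlocks₂₂ := by
      ext (i | ⟨⟩) (j | ⟨⟩) <;> simp [E', E, toBlocks₂₁, toBlocks₂₂]
    rw [hblocks, det_fromBlocks_zero₁₂, det_one, one_mul, det_unique]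
    rfl
  rw [hq, eq_comm, mul_eq_zero, or_iff_right X_ne_zero] at hfactor
  rw [← hE', ← coeff_det_X_add_C_zero S' E', hfactor, Polynomial.coeff_zero]

end Pencil

end Matrix

section MaxRank

variable {F : Type*} [Field F] {n a b : ℕ}

theorem bddAbove_range_rank_map_eval (M : Matrix (Fin a) (Fin b) (MvPolynomial (Fin n) F)) :
    BddAbove (Set.range fun p : Fin n → F => (M.map (eval p)).rank) :=
  ⟨b, by rintro _ ⟨p, rfl⟩; exact Matrix.rank_le_width _⟩

theorem rank_map_eval_le_maxR1 (M : Matrix (Fin a) (Fin b) (MvPolynomial (Fin n) F))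
    (p : Fin n → F) : (M.map (eval p)).rank ≤ MaxR1 M :=
  le_ciSup (bddAbove_range_rank_map_eval M) p

theorem exists_rank_map_eval_eq_maxR1 (M : Matrix (Fin a) (Fin b) (MvPolynomial (Fin n) F)) :
    ∃ p : Fin n → F, (M.map (eval p)).rank = MaxR1 M :=
  Nat.sSup_mem (Set.range_nonempty _) (bddAbove_range_rank_map_eval M)

end MaxRank

theorem eq_zero_of_forall_rank_map_eval_le {F σ : Type*} [Field F] {a b r : ℕ}
    {N : Matrix (Fin a) (Fin b) (MvPolynomial σ F)}
    (hN : ∀ i j, (N i j).IsHomogeneous 1) (hF : (r : Cardinal) < Cardinal.mk F)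
    (hrank : ∀ p, (N.map (eval p)).rank ≤ r) {p₀ : σ → F}
    (hp₀ : N.map (eval p₀) = Matrix.rankNormalForm a b r)
    {i : Fin a} {j : Fin b} (hi : r ≤ i) (hj : r ≤ j) : N i j = 0 := by
  refine (hN i j).eq_zero_of_forall_eval_eq_zero_of_le_card (fun p => ?_)
    (by exact_mod_cast Cardinal.one_le_iff_ne_zero.mpr (Cardinal.mk_ne_zero F))
  let rows : Fin r ⊕ Unit → Fin a := Sum.elim (Fin.castLE (hi.trans i.isLt.le)) fun _ => i
  let cols : Fin r ⊕ Unit → Fin b := Sum.elim (Fin.castLE (hj.trans j.isLt.le)) fun _ => j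
  have hdet (q : σ → F) : ((N.map (eval q)).submatrix rows cols).det = 0 :=
    Matrix.det_submatrix_eq_zero_of_rank_lt _ _ _ (by simpa using Nat.lt_succ_of_le (hrank q))
  have hcorner : (Matrix.rankNormalForm a b r).submatrix rows cols =
      (Matrix.fromBlocks 1 0 0 0 : Matrix (Fin r ⊕ Unit) (Fin r ⊕ Unit) F) := by
    ext (k | ⟨⟩) (l | ⟨⟩) <;>
      simp [Matrix.rankNormalForm, rows, cols, Matrix.one_apply, Fin.ext_iff] <;> omega
  have hline (t : F) :
      N.map (eval (p₀ + t • p)) = N.map (eval p₀) + t • N.map (eval p) := by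
    ext k l : 1
    simp [(hN k l).eval_add_smul]
  have hpencil (t : F) :
      (Matrix.fromBlocks 1 0 0 0 + t • (N.map (eval p)).submatrix rows cols).det = 0 := by
    have h := hdet (p₀ + t • p)
    rw [hline] at h
    rwa [← hcorner, ← hp₀]
  simpa [rows, cols] using Matrix.corner_eq_zero_of_det_pencil_eq_zero _ (by simpa using hF)
    hpencil (hdet p)

theorem statement_17_general (F : Type*) [Field F] (n a b : ℕ) (r : ℕ)
    (M : Matrix (Fin a) (Fin b) (MvPolynomial (Fin n) F))
    (hM : ∀ i j, (M i j).IsHomogeneous 1)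
    (hmax : MaxR1 M = r) (hF : (r : Cardinal) < Cardinal.mk F) :
    ∃ (P : Matrix (Fin a) (Fin a) F) (Q : Matrix (Fin b) (Fin b) F),
      IsUnit P ∧ IsUnit Q ∧
      ∀ (i : Fin a) (j : Fin b), r ≤ (i : ℕ) → r ≤ (j : ℕ) →
        (P.map (fun c => (MvPolynomial.C c : MvPolynomial (Fin n) F)) * M *
          Q.map (fun c => (MvPolynomial.C c : MvPolynomial (Fin n) F))) i j = 0 := by
  obtain ⟨p₀, hp₀⟩ := exists_rank_map_eval_eq_maxR1 M
  obtain ⟨P, Q, hP, hQ, hPQ⟩ :=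
    Matrix.exists_isUnit_mul_mul_eq_rankNormalForm _ (hp₀.trans hmax)
  have heval (p : Fin n → F) :
      (P.map (fun c => (MvPolynomial.C c : MvPolynomial (Fin n) F)) * M *
        Q.map (fun c => (MvPolynomial.C c : MvPolynomial (Fin n) F))).map (eval p) =
      P * M.map (eval p) * Q := by
    simp [Matrix.map_mul, Matrix.map_map, Function.comp_def]
  have hrank (p : Fin n → F) : (P * M.map (eval p) * Q).rank ≤ r := by
    rw [Matrix.rank_mul_eq_left_of_isUnit_det _ _ ((Matrix.isUnit_iff_isUnit_det Q).mp hQ),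
      Matrix.rank_mul_eq_right_of_isUnit_det _ _ ((Matrix.isUnit_iff_isUnit_det P).mp hP), ← hmax]
    exact rank_map_eval_le_maxR1 M p
  exact ⟨P, Q, hP, hQ, fun i j hi hj => eq_zero_of_forall_rank_map_eval_le
    (MvPolynomial.isHomogeneous_map_C_mul_mul_map_C hM P Q) hF (fun p => heval p ▸ hrank p)
    ((heval p₀).trans hPQ) hi hj⟩

/-- Flanders: If `M` is a matrix of linear forms with
`MaxR(M) = r` and `|F| > r`, then there are invertible scalar matrices `P, Q`
such that `PMQ` vanishes in its bottom-right `(a − r) × (b − r)` block. -/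
theorem statement_17 (F : Type*) [Field F] (n a b : ℕ) (hn : 1 ≤ n) (r : ℕ)
    (M : Matrix (Fin a) (Fin b) (MvPolynomial (Fin n) F))
    (hM : ∀ i j, (M i j).IsHomogeneous 1)
    (hmax : MaxR1 M = r) (hF : (r : Cardinal) < Cardinal.mk F) :
    ∃ (P : Matrix (Fin a) (Fin a) F) (Q : Matrix (Fin b) (Fin b) F),
      IsUnit P ∧ IsUnit Q ∧
      ∀ (i : Fin a) (j : Fin b), r ≤ (i : ℕ) → r ≤ (j : ℕ) →
        (P.map (fun c => (MvPolynomial.C c : MvPolynomial (Fin n) F)) * M *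
          Q.map (fun c => (MvPolynomial.C c : MvPolynomial (Fin n) F))) i j = 0 :=
  statement_17_general F n a b r M hM hmax hF
end
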